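/- arXiv:2208.10432 — 10 statements merged into one kernel-verified Lean document; each statement's English description precedes it below -/
import Mathlib

section
/- Let A be a commutative ℚ-algebra (or algebra over a field of characteristic zero) and d : A → A a derivation. If a ∈ A is nilpotent, then d(a) is nilpotent. -/
lemma rat_smul_cancel {A : Type*} [AddCommGroup A] [Module ℚ A] (m : ℕ) (hm : m ≠ 0)
    {x : A} (hx : (m : ℕ) • x = 0) : x = 0 := by
  have h : ((m : ℚ)) • x = 0 := by
    rw [← Nat.cast_smul_eq_nsmul ℚ] at hx; exact hx
  have : ((m : ℚ)⁻¹ * (m : ℚ)) • x = 0 := by rw [mul_smul, h, smul_zero]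
  rwa [inv_mul_cancel₀ (by exact_mod_cast hm), one_smul] at this

/-- Let `A` be a commutative `ℚ`-algebra and `d : A → A` a derivation.
If `a ∈ A` is nilpotent, then `d a` is nilpotent. -/
theorem derivation_nilpotent {A : Type*} [CommRing A] [Algebra ℚ A]
    (d : Derivation ℚ A A) {a : A} (h : IsNilpotent a) : IsNilpotent (d a) := by
  obtain ⟨n, hn⟩ := h
  have key : ∀ k, k ≤ n → a ^ (n - k) * (d a) ^ (2 * k + 1) = 0 := by
    intro k
    induction k with
    | zero => intro _; simp [hn]
    | succ k ih =>
      intro hk1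
      have hk : k ≤ n := Nat.le_of_succ_le hk1
      have H := ih hk
      have hd : d (a ^ (n - k) * (d a) ^ (2 * k + 1)) = 0 := by rw [H, map_zero]
      rw [Derivation.leibniz, Derivation.leibniz_pow, Derivation.leibniz_pow] at hd
      -- hd : a^(n-k) • ((2k+1) • (d a)^(2k) • d (d a)) + (d a)^(2k+1) • ((n-k) • a^(n-k-1) • d a) = 0
      have hd' := congrArg (fun x => (d a) * x) hd
      simp only [smul_eq_mul, mul_add, mul_zero, smul_mul_assoc, mul_smul_comm,
        Nat.add_sub_cancel] at hd' ⊢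
      have e1 : d a * (a ^ (n - k) * ((d a) ^ (2 * k) * d (d a)))
          = (a ^ (n - k) * (d a) ^ (2 * k + 1)) * d (d a) := by ring
      have e2 : d a * ((d a) ^ (2 * k + 1) * (a ^ (n - k - 1) * d a))
          = a ^ (n - k - 1) * (d a) ^ (2 * k + 3) := by ring
      rw [e1, H, zero_mul, smul_zero, zero_add, e2] at hd'
      have hbase : n - (k + 1) = n - k - 1 := by omega
      have hexp : 2 * k + 2 * 1 + 1 = 2 * k + 3 := by ring
      rw [hbase, hexp]
      have hnk : n - k ≠ 0 := Nat.sub_ne_zero_of_lt hk1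
      exact rat_smul_cancel (n - k) hnk hd'
  have := key n le_rfl
  simp only [Nat.sub_self, pow_zero, one_mul] at this
  exact ⟨2 * n + 1, this⟩
end

section
/- Let b, c ≥ 1 and let f be a polynomial in variables p⁽¹⁾,…,p⁽ᵇ⁾, q⁽¹⁾,…,q⁽ᶜ⁾ over a field k, symmetric separately in the p's and in the q's. If the substitution p⁽ᵇ⁾ ↦ Z, q⁽ᶜ⁾ ↦ Z yields a polynomial independent of Z and equal to zero (i.e. f lies in the kernel of the evaluation map ψ), then f is divisible by the product ∏_{1≤i≤b, 1≤j≤c} (p⁽ⁱ⁾ − q⁽ʲ⁾). -/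
/-!
Specialising `Z ↦ q⁽ᶜ⁾` in `ψ f = 0` shows that `f` vanishes under the substitution
`p⁽ᵇ⁾ ↦ q⁽ᶜ⁾`, i.e. `p⁽ᵇ⁾ - q⁽ᶜ⁾ ∣ f`, and the symmetries of `f` move this factor to every
`p⁽ⁱ⁾ - q⁽ʲ⁾`. These linear factors are pairwise non-associated irreducibles of the factorial
ring `𝕜[p, q]`, so their product divides `f`.
-/

open MvPolynomial

namespace MvPolynomial

variable {σ R : Type*} [CommRing R]

theorem irreducible_X_sub_X [IsDomain R] {a b : σ} (hab : a ≠ b) :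
    Irreducible (X a - X b : MvPolynomial σ R) := by
  simpa [sub_eq_add_neg] using
    irreducible_mul_X_add 1 (-X b) a one_ne_zero (by simp) (by simp [vars_X, hab])
      isRelPrime_one_left

theorem X_sub_X_dvd_iff_rename_update_eq_zero [DecidableEq σ] (a b : σ) (f : MvPolynomial σ R) :
    X a - X b ∣ f ↔ rename (Function.update id a b) f = 0 := by
  constructor
  · rintro ⟨g, rfl⟩
    simp [Function.update_apply]
  · intro hf
    let π := Ideal.Quotient.mkₐ R (Ideal.span {(X a - X b : MvPolynomial σ R)})
    -- Modulo `X a - X b`, the substitution `a ↦ b` is the identity.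
    have hπ : π.comp (rename (Function.update id a b)) = π := by
      ext v
      by_cases hv : v = a
      · subst hv
        simpa [π, Ideal.Quotient.eq, Ideal.mem_span_singleton] using dvd_sub_comm.mp dvd_rfl
      · simp [hv]
    rw [← Ideal.mem_span_singleton, ← Ideal.Quotient.eq_zero_iff_mem]
    simpa [π, hf] using (DFunLike.congr_fun hπ f).symm

section Sum

open Function

variable {α β : Type*}

theorem X_inl_sub_X_inr_dvd_iff [DecidableEq α] [DecidableEq β] [Nontrivial R]
    {i k : α} {j l : β} :
    (X (.inl i) - X (.inr j) : MvPolynomial (α ⊕ β) R) ∣ X (.inl k) - X (.inr l) ↔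
      i = k ∧ j = l := by
  rw [X_sub_X_dvd_iff_rename_update_eq_zero]
  simp only [map_sub, rename_X, Function.update_apply, sub_eq_zero, X_injective.eq_iff]
  split_ifs with hki <;> grind

theorem pairwise_isRelPrime_X_inl_sub_X_inr [IsDomain R] :
    Pairwise (IsRelPrime on
      (fun x : α × β => (X (.inl x.1) - X (.inr x.2) : MvPolynomial (α ⊕ β) R))) := by
  classical
  rintro ⟨i, j⟩ ⟨k, l⟩ hne
  rw [onFun, (irreducible_X_sub_X Sum.inl_ne_inr).isRelPrime_iff_not_dvd,
    X_inl_sub_X_inr_dvd_iff]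
  simpa using hne

end Sum

end MvPolynomial

/-- Let `f` be a polynomial in variables `p⁽¹⁾,…,p⁽ᵇ⁾, q⁽¹⁾,…,q⁽ᶜ⁾` (with `b, c ≥ 1`),
symmetric separately in the `p`'s and in the `q`'s.  If substituting `p⁽ᵇ⁾ ↦ Z`,
`q⁽ᶜ⁾ ↦ Z` yields the zero polynomial (in particular it is independent of `Z`),
then `f` is divisible by `∏_{i,j} (p⁽ⁱ⁾ − q⁽ʲ⁾)`. -/
theorem supersymmetric_kernel_divisibility
    (𝕜 : Type*) [Field 𝕜] (b c : ℕ)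
    (f : MvPolynomial (Fin (b + 1) ⊕ Fin (c + 1)) 𝕜)
    (hp : ∀ σ : Equiv.Perm (Fin (b + 1)), rename (Sum.map ⇑σ id) f = f)
    (hq : ∀ τ : Equiv.Perm (Fin (c + 1)), rename (Sum.map id ⇑τ) f = f)
    (h0 : MvPolynomial.aeval (fun v : Fin (b + 1) ⊕ Fin (c + 1) =>
        match v with
        | Sum.inl i => if i = Fin.last b then
            (Polynomial.X : Polynomial (MvPolynomial (Fin (b + 1) ⊕ Fin (c + 1)) 𝕜))
          else Polynomial.C (X (Sum.inl i))
        | Sum.inr j => if j = Fin.last c then Polynomial.X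
          else Polynomial.C (X (Sum.inr j))) f = 0) :
    (∏ i : Fin (b + 1), ∏ j : Fin (c + 1), (X (Sum.inl i) - X (Sum.inr j))) ∣ f := by
  have hlast : X (.inl (Fin.last b)) - X (.inr (Fin.last c)) ∣ f := by
    rw [X_sub_X_dvd_iff_rename_update_eq_zero]
    have hZ := congrArg ((Polynomial.aeval
      (X (.inr (Fin.last c)) : MvPolynomial (Fin (b + 1) ⊕ Fin (c + 1)) 𝕜)).restrictScalars 𝕜) h0
    rw [comp_aeval_apply, map_zero] at hZ
    convert hZ using 2
    ext1 (i | j)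
    · by_cases hi : i = Fin.last b <;> simp [hi]
    · by_cases hj : j = Fin.last c <;> simp [hj]
  have hdvd (i : Fin (b + 1)) (j : Fin (c + 1)) : X (.inl i) - X (.inr j) ∣ f := by
    let e := Sum.map (Equiv.swap (Fin.last b) i) (Equiv.swap (Fin.last c) j)
    have he : rename e f = f := by
      rw [show e = Sum.map (Equiv.swap (Fin.last b) i) id ∘ Sum.map id (Equiv.swap (Fin.last c) j)
        by simp [e, Sum.map_comp_map], ← rename_rename, hq, hp]
    simpa [e, he] using map_dvd (rename e) hlast
  rw [← Fintype.prod_prod_type']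
  exact Fintype.prod_dvd_of_isRelPrime pairwise_isRelPrime_X_inl_sub_X_inr fun x => hdvd x.1 x.2
end

section
/- The polynomial ring k[x₁,…,x_n] is a free module over its subring of symmetric polynomials k[x₁,…,x_n]^{𝔖_n} of rank n!. -/
open MvPolynomial

namespace FreeSym

/-- staircase index type: exponent of `x i` is at most `i`. -/
abbrev J (n : ℕ) := ∀ i : Fin n, Fin (i.1 + 1)

lemma card_J (n : ℕ) : Fintype.card (J n) = Nat.factorial n := by
  rw [Fintype.card_pi]
  simp only [Fintype.card_fin]
  rw [Fin.prod_univ_eq_prod_range (fun i => i + 1) n]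
  exact Finset.prod_range_add_one_eq_factorial n

variable {R : Type*} [CommRing R] {n : ℕ}

/-- staircase monomial -/
noncomputable def mono (R : Type*) [CommRing R] {n : ℕ} (a : J n) : MvPolynomial (Fin n) R :=
  ∏ i, X i ^ (a i : ℕ)

/-- the bridge isomorphism separating the last variable -/
noncomputable def Φ (R : Type*) [CommRing R] (n : ℕ) :
    MvPolynomial (Fin (n+1)) R ≃ₐ[R] MvPolynomial (Fin n) (Polynomial R) :=
  (renameEquiv R finSuccEquivLast).trans (optionEquivRight R (Fin n))

@[simp] lemma Φ_X_castSucc (i : Fin n) : Φ R n (X i.castSucc) = X i := by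
  simp [Φ, finSuccEquivLast_castSucc, optionEquivRight_X_some]

@[simp] lemma Φ_X_last : Φ R n (X (Fin.last n)) = C Polynomial.X := by
  simp [Φ, finSuccEquivLast_last, optionEquivRight_X_none]

@[simp] lemma Φ_C (r : R) : Φ R n (C r) = C (Polynomial.C r) := by
  simp [Φ, optionEquivRight_C]

lemma Φ_Xlast_pow (d : ℕ) : Φ R n (X (Fin.last n) ^ d) = C (Polynomial.X ^ d) := by
  rw [map_pow, Φ_X_last, ← map_pow]

/-- lift a permutation of `Fin n` to a permutation of `Fin (n+1)` fixing the last element -/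
def liftPerm (e : Equiv.Perm (Fin n)) : Equiv.Perm (Fin (n+1)) :=
  finSuccEquivLast.trans ((e.optionCongr).trans finSuccEquivLast.symm)

@[simp] lemma liftPerm_castSucc (e : Equiv.Perm (Fin n)) (i : Fin n) :
    liftPerm e i.castSucc = (e i).castSucc := by
  simp [liftPerm, finSuccEquivLast_castSucc, finSuccEquivLast_symm_some]

@[simp] lemma liftPerm_last (e : Equiv.Perm (Fin n)) : liftPerm e (Fin.last n) = Fin.last n := by
  simp [liftPerm, finSuccEquivLast_last]

lemma Φ_rename (e : Equiv.Perm (Fin n)) (f : MvPolynomial (Fin (n+1)) R) :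
    Φ R n (rename (liftPerm e) f) = rename e (Φ R n f) := by
  induction f using MvPolynomial.induction_on with
  | C r => simp [rename_C]
  | add p q hp hq => simp [map_add, hp, hq]
  | mul_X p i ih =>
    rw [map_mul, map_mul, map_mul, map_mul, ih]
    congr 1
    induction i using Fin.lastCases with
    | last => simp [rename_C]
    | cast j => simp

lemma IsSymmetric.phi {f : MvPolynomial (Fin (n+1)) R} (hf : f.IsSymmetric) :
    ((Φ R n) f).IsSymmetric := by
  intro e
  rw [← Φ_rename, hf (liftPerm e)]

/-- the equivalence between staircase indices for `n+1` and pairs. -/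
def eJ (n : ℕ) : J (n+1) ≃ J n × Fin (n+1) where
  toFun b := (fun i => b i.castSucc,
    ⟨(b (Fin.last n)).1, by have := (b (Fin.last n)).2; simpa using this⟩)
  invFun ad i :=
    if h : (i : ℕ) < n then ad.1 ⟨i.1, h⟩
    else ⟨ad.2.1, by have h1 := i.2; have h2 := ad.2.2; omega⟩
  left_inv b := by
    funext i
    by_cases h : (i : ℕ) < n
    · simp only [dif_pos h]
      obtain ⟨iv, hiv⟩ := i
      rfl
    · simp only [dif_neg h]
      have : i = Fin.last n := Fin.ext (by have := i.2; simp; omega)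
      subst this
      rfl
  right_inv ad := by
    refine Prod.ext ?_ ?_
    · funext j
      have hj : ((j.castSucc : Fin (n+1)) : ℕ) < n := by simp [j.2]
      simp only [dif_pos hj]
      obtain ⟨jv, hjv⟩ := j
      rfl
    · have : ¬ ((Fin.last n : Fin (n+1)) : ℕ) < n := by simp
      simp only [dif_neg this]

lemma mono_split (b : J (n+1)) :
    mono R b = rename Fin.castSucc (mono R ((eJ n b).1)) * X (Fin.last n) ^ (((eJ n b).2 : ℕ)) := by
  rw [mono, Fin.prod_univ_castSucc]
  congr 1
  · rw [mono, map_prod]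
    refine Finset.prod_congr rfl fun i _ => ?_
    simp [eJ]

lemma Φ_renameCastSucc (p : MvPolynomial (Fin n) R) :
    Φ R n (rename Fin.castSucc p) = MvPolynomial.map (Polynomial.C) p := by
  induction p using MvPolynomial.induction_on with
  | C r => simp [rename_C]
  | add p q hp hq => simp [map_add, hp, hq]
  | mul_X p i ih => simp [map_mul, ih]

section InM

variable (R : Type*) [CommRing R] (n : ℕ)

lemma symm_zero : (0 : MvPolynomial (Fin n) R).IsSymmetric := fun _ => map_zero _

lemma symm_one : (1 : MvPolynomial (Fin n) R).IsSymmetric := fun _ => map_one _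

lemma symm_C (r : R) : (C r : MvPolynomial (Fin n) R).IsSymmetric := fun e => rename_C _ r

/-- membership in the module generated over symmetric polynomials by the first `n+1`
powers of the last variable. -/
def InM (f : MvPolynomial (Fin (n+1)) R) : Prop :=
  ∃ s : Fin (n+1) → MvPolynomial (Fin (n+1)) R,
    (∀ d, (s d).IsSymmetric) ∧ f = ∑ d, s d * X (Fin.last n) ^ (d : ℕ)

variable {R n}

lemma InM_add {f g} (hf : InM R n f) (hg : InM R n g) : InM R n (f + g) := by
  obtain ⟨s, hs, rfl⟩ := hf; obtain ⟨t, ht, rfl⟩ := hg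
  exact ⟨fun d => s d + t d, fun d => (hs d).add (ht d),
    by rw [← Finset.sum_add_distrib]; exact Finset.sum_congr rfl fun d _ => by ring⟩

lemma InM_symm_mul {f g} (hg : g.IsSymmetric) (hf : InM R n f) : InM R n (g * f) := by
  obtain ⟨s, hs, rfl⟩ := hf
  exact ⟨fun d => g * s d, fun d => hg.mul (hs d),
    by rw [Finset.mul_sum]; exact Finset.sum_congr rfl fun d _ => by ring⟩

lemma InM_of_symm {g} (hg : (g : MvPolynomial (Fin (n+1)) R).IsSymmetric) : InM R n g := by
  refine ⟨fun d => if d = 0 then g else 0, fun d => by dsimp only; split <;> simp [hg, symm_zero], ?_⟩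
  rw [Finset.sum_eq_single (0 : Fin (n+1))]
  · simp
  · intro d _ hd; simp [hd]
  · simp

lemma InM_zero : InM R n 0 := InM_of_symm (symm_zero R (n+1))

lemma InM_neg {f} (hf : InM R n f) : InM R n (-f) := by
  obtain ⟨s, hs, rfl⟩ := hf
  exact ⟨fun d => -(s d), fun d => (hs d).neg,
    by rw [← Finset.sum_neg_distrib]; exact Finset.sum_congr rfl fun d _ => by ring⟩

lemma InM_sub {f g} (hf : InM R n f) (hg : InM R n g) : InM R n (f - g) := by
  rw [sub_eq_add_neg]; exact InM_add hf (InM_neg hg)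

lemma InM_sum {ι : Type*} (s : Finset ι) (f : ι → MvPolynomial (Fin (n+1)) R)
    (h : ∀ i ∈ s, InM R n (f i)) : InM R n (∑ i ∈ s, f i) :=
  Finset.sum_induction f (InM R n) (fun _ _ ha hb => InM_add ha hb) InM_zero h

lemma InM_Xpow_fin (d : Fin (n+1)) : InM R n (X (Fin.last n) ^ (d : ℕ)) := by
  refine ⟨fun e => if e = d then 1 else 0, fun e => by dsimp only; split <;> simp [symm_one, symm_zero], ?_⟩
  rw [Finset.sum_eq_single d]
  · simp
  · intro e _ he; simp [he]
  · simp

lemma InM_one : InM R n 1 := by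
  have := InM_Xpow_fin (R := R) (n := n) 0
  simpa using this

lemma InM_X_last_pow_succ : InM R n (X (Fin.last n) ^ (n+1)) := by
  classical
  rcases subsingleton_or_nontrivial R with hR | hR
  · exact ⟨0, fun d => symm_zero _ _, Subsingleton.elim _ _⟩
  set P : Polynomial (MvPolynomial (Fin (n+1)) R) :=
    ∏ i : Fin (n+1), (Polynomial.X - Polynomial.C (X i)) with hP
  have hmon : ∀ i ∈ Finset.univ, (Polynomial.X - Polynomial.C (X i : MvPolynomial (Fin (n+1)) R)).Monic :=
    fun i _ => Polynomial.monic_X_sub_C _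
  have hmonic : P.Monic := Polynomial.monic_prod_of_monic _ _ hmon
  have hdeg : P.natDegree = n + 1 := by
    rw [hP, Polynomial.natDegree_prod_of_monic _ _ hmon]
    simp only [Polynomial.natDegree_X_sub_C]
    simp
  have hcs : ∀ k, (P.coeff k).IsSymmetric := by
    intro k e
    have hco : ∀ x, (rename (R := R) e).toRingHom x = rename e x := fun _ => rfl
    have hmap : P.map (rename (R := R) e).toRingHom = P := by
      rw [hP, Polynomial.map_prod]
      simp only [Polynomial.map_sub, Polynomial.map_X, Polynomial.map_C, hco, rename_X]
      exact Equiv.prod_comp e (fun j => Polynomial.X - Polynomial.C (X j))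
    calc rename e (P.coeff k)
        = (P.map (rename (R := R) e).toRingHom).coeff k := by
          rw [Polynomial.coeff_map]; rfl
      _ = P.coeff k := by rw [hmap]
  have heval : P.eval (X (Fin.last n)) = 0 := by
    rw [hP, Polynomial.eval_prod]
    exact Finset.prod_eq_zero (Finset.mem_univ (Fin.last n)) (by simp)
  have hsum : (0 : MvPolynomial (Fin (n+1)) R)
      = ∑ i ∈ Finset.range (n+2), P.coeff i * X (Fin.last n) ^ i := by
    rw [← heval, Polynomial.eval_eq_sum_range, hdeg]
  rw [Finset.sum_range_succ] at hsum
  have hc : P.coeff (n+1) = 1 := by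
    have h1 := hmonic.coeff_natDegree
    rwa [hdeg] at h1
  rw [hc, one_mul] at hsum
  refine ⟨fun d => -(P.coeff d), fun d => (hcs d).neg, ?_⟩
  rw [Fin.sum_univ_eq_sum_range (fun i => -(P.coeff i) * X (Fin.last n) ^ i) (n+1)]
  have : ∑ i ∈ Finset.range (n+1), -(P.coeff i) * X (Fin.last n) ^ i
      = -∑ i ∈ Finset.range (n+1), P.coeff i * X (Fin.last n) ^ i := by
    rw [← Finset.sum_neg_distrib]; exact Finset.sum_congr rfl fun d _ => by ring
  rw [this]
  linear_combination -hsum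

lemma InM_mul_X_last {f} (hf : InM R n f) : InM R n (X (Fin.last n) * f) := by
  obtain ⟨s, hs, rfl⟩ := hf
  rw [Finset.mul_sum]
  refine InM_sum _ _ fun d _ => ?_
  have h1 : X (Fin.last n) * (s d * X (Fin.last n) ^ (d:ℕ)) = s d * X (Fin.last n) ^ ((d:ℕ)+1) := by
    ring
  rw [h1]
  refine InM_symm_mul (hs d) ?_
  by_cases h : (d : ℕ) < n
  · have h2 := InM_Xpow_fin (R := R) (n := n) ⟨d.1+1, by omega⟩
    simpa using h2
  · have hd : (d : ℕ) = n := by have := d.2; omega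
    rw [hd]
    exact InM_X_last_pow_succ

lemma InM_Xpow_mul {g} (m : ℕ) (hg : InM R n g) : InM R n (X (Fin.last n) ^ m * g) := by
  induction m with
  | zero => simpa using hg
  | succ m ih =>
    have h1 : X (Fin.last n) ^ (m+1) * g = X (Fin.last n) * (X (Fin.last n) ^ m * g) := by ring
    rw [h1]
    exact InM_mul_X_last ih

lemma InM_Xpow (m : ℕ) : InM R n (X (Fin.last n) ^ m) := by
  have := InM_Xpow_mul (R := R) (n := n) m InM_one
  simpa using this

lemma InM_mul {f g} (hf : InM R n f) (hg : InM R n g) : InM R n (f * g) := by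
  obtain ⟨s, hs, rfl⟩ := hf
  rw [Finset.sum_mul]
  refine InM_sum _ _ fun d _ => ?_
  have h1 : s d * X (Fin.last n) ^ (d:ℕ) * g = s d * (X (Fin.last n) ^ (d:ℕ) * g) := by ring
  rw [h1]
  exact InM_symm_mul (hs d) (InM_Xpow_mul _ hg)

end InM

section Roots

variable {R : Type*} [CommRing R] [IsDomain R] {n : ℕ}

lemma swap_roots (c : Fin (n+1) → MvPolynomial (Fin (n+1)) R)
    (hs : ∀ d, (c d).IsSymmetric)
    (h : ∑ d, c d * X (Fin.last n) ^ (d : ℕ) = 0) : ∀ d, c d = 0 := by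
  classical
  set Qp : Polynomial (MvPolynomial (Fin (n+1)) R) :=
    ∑ d : Fin (n+1), Polynomial.C (c d) * Polynomial.X ^ (d : ℕ) with hQ
  have hev : ∀ i : Fin (n+1), Qp.eval (X i) = 0 := by
    intro i
    have h2 := congrArg (rename (Equiv.swap i (Fin.last n))) h
    rw [map_zero, map_sum] at h2
    have h3 : ∀ d : Fin (n+1), rename (Equiv.swap i (Fin.last n)) (c d * X (Fin.last n) ^ (d:ℕ))
        = c d * X i ^ (d:ℕ) := by
      intro d
      rw [map_mul, map_pow, rename_X, hs d (Equiv.swap i (Fin.last n)), Equiv.swap_apply_right]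
    rw [Finset.sum_congr rfl (fun d _ => h3 d)] at h2
    rw [hQ, Polynomial.eval_finset_sum]
    simpa using h2
  have hQ0 : Qp = 0 := by
    refine Polynomial.eq_zero_of_natDegree_lt_card_of_eval_eq_zero Qp
      (MvPolynomial.X_injective) hev ?_
    have hdeg : Qp.natDegree ≤ n := by
      refine Polynomial.natDegree_sum_le_of_forall_le _ _ fun d _ => ?_
      refine le_trans (Polynomial.natDegree_C_mul_le _ _) ?_
      rw [Polynomial.natDegree_X_pow]
      have := d.2
      omega
    have hcard : Fintype.card (Fin (n+1)) = n + 1 := Fintype.card_fin _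
    omega
  intro d
  have h4 := congrArg (fun p => Polynomial.coeff p (d : ℕ)) hQ0
  simp only [hQ, Polynomial.finset_sum_coeff, Polynomial.coeff_C_mul, Polynomial.coeff_X_pow,
    Polynomial.coeff_zero] at h4
  rw [Finset.sum_eq_single d] at h4
  · simpa using h4
  · intro e _ he
    have hne : ¬((d : ℕ) = (e : ℕ)) := fun hh => he (Fin.ext hh.symm)
    rw [if_neg hne, mul_zero]
  · simp

end Roots

section Eps

variable {R : Type*} [CommRing R] {n : ℕ}

/-- elementary symmetric polynomials in all but the last variable -/
noncomputable def eps (R : Type*) [CommRing R] (n j : ℕ) : MvPolynomial (Fin (n+1)) R :=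
  rename Fin.castSucc (esymm (Fin n) R j)

lemma Φ_eps (j : ℕ) : Φ R n (eps R n j) = esymm (Fin n) (Polynomial R) j := by
  rw [eps, Φ_renameCastSucc]
  exact map_esymm (Fin n) R j Polynomial.C

lemma eps_mem {j : ℕ} (hj : j ≤ n) : InM R n (eps R n j) := by
  classical
  rcases subsingleton_or_nontrivial R with hR | hR
  · exact ⟨0, fun d => symm_zero _ _, Subsingleton.elim _ _⟩
  set Q' : Polynomial (MvPolynomial (Fin (n+1)) R) :=
    ∏ i : Fin n, (Polynomial.X + Polynomial.C (X i.castSucc)) with hQ'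
  set Q : Polynomial (MvPolynomial (Fin (n+1)) R) :=
    ∏ i : Fin (n+1), (Polynomial.X + Polynomial.C (X i)) with hQdef
  have hmon' : ∀ i ∈ (Finset.univ : Finset (Fin n)),
      (Polynomial.X + Polynomial.C (X (Fin.castSucc i) : MvPolynomial (Fin (n+1)) R)).Monic :=
    fun i _ => Polynomial.monic_X_add_C _
  have hdeg' : Q'.natDegree = n := by
    rw [hQ', Polynomial.natDegree_prod_of_monic _ _ hmon']
    simp only [Polynomial.natDegree_X_add_C]
    simp
  have hsplit : Q = Q' * (Polynomial.X + Polynomial.C (X (Fin.last n))) := by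
    rw [hQdef, hQ', Fin.prod_univ_castSucc]
  have hQsym : ∀ k, k ≤ n + 1 → (Q.coeff k).IsSymmetric := by
    intro k hk
    have h1 := MvPolynomial.prod_X_add_C_coeff R (Fin (n+1)) k (by simpa using hk)
    rw [← hQdef] at h1
    rw [h1]
    exact esymm_isSymmetric _ _ _
  have hrec : ∀ k, Q.coeff (k+1) = Q'.coeff k + Q'.coeff (k+1) * X (Fin.last n) := by
    intro k
    rw [hsplit, mul_add, Polynomial.coeff_add, Polynomial.coeff_mul_X, Polynomial.coeff_mul_C]
  have hdown : ∀ j : ℕ, InM R n (Q'.coeff (n - j)) := by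
    intro j
    induction j with
    | zero =>
      have h1 : Q'.coeff n = 1 := by
        have h2 := (Polynomial.monic_prod_of_monic _ _ hmon').coeff_natDegree
        rw [← hQ'] at h2
        rwa [hdeg'] at h2
      simpa [h1] using InM_one (R := R) (n := n)
    | succ j ih =>
      by_cases hjn : j < n
      · have hk : n - (j+1) + 1 = n - j := by omega
        have h2 : Q'.coeff (n - (j+1)) = Q.coeff (n - (j+1) + 1)
            - Q'.coeff (n - (j+1) + 1) * X (Fin.last n) := by
          rw [hrec (n - (j+1))]; ring
        rw [h2, hk]
        refine InM_sub (InM_of_symm (hQsym _ (by omega))) ?_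
        rw [mul_comm]
        exact InM_mul_X_last ih
      · have hh : n - (j+1) = n - j := by omega
        rw [hh]; exact ih
  have hcoeff : Q'.coeff (n - j) = eps R n j := by
    have h1 := Finset.prod_X_add_C_coeff (Finset.univ : Finset (Fin n))
      (fun i => (X i.castSucc : MvPolynomial (Fin (n+1)) R)) (show n - j ≤ _ by simp)
    rw [← hQ'] at h1
    have hcard : (Finset.univ : Finset (Fin n)).card - (n - j) = j := by
      simp only [Finset.card_univ, Fintype.card_fin]
      omega
    rw [hcard] at h1
    rw [h1, eps, esymm, map_sum]
    refine Finset.sum_congr rfl fun t _ => ?_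
    rw [map_prod]
    exact Finset.prod_congr rfl fun i _ => (rename_X _ _).symm
  rw [← hcoeff]
  exact hdown j

lemma Φ_aeval_C (p : Polynomial R) :
    Φ R n (Polynomial.aeval (X (Fin.last n)) p) = C p := by
  induction p using Polynomial.induction_on' with
  | add p q hp hq => rw [map_add, map_add, hp, hq, map_add]
  | monomial k r =>
    rw [Polynomial.aeval_monomial, map_mul, map_pow, Φ_X_last, MvPolynomial.algebraMap_eq, Φ_C,
      ← map_pow, ← map_mul, Polynomial.C_mul_X_pow_eq_monomial]

lemma InM_aeval_C (p : Polynomial R) : InM R n (Polynomial.aeval (X (Fin.last n)) p) := by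
  induction p using Polynomial.induction_on' with
  | add p q hp hq => rw [map_add]; exact InM_add hp hq
  | monomial k r =>
    rw [Polynomial.aeval_monomial, MvPolynomial.algebraMap_eq]
    exact InM_symm_mul (symm_C _ _ r) (InM_Xpow k)

lemma mem_of_symm_phi {h : MvPolynomial (Fin n) (Polynomial R)} (hh : h.IsSymmetric) :
    InM R n ((Φ R n).symm h) := by
  obtain ⟨q, hq⟩ := esymmAlgHom_surjective (σ := Fin n) (Polynomial R) (n := n) (by simp)
    ⟨h, (mem_symmetricSubalgebra h).mpr hh⟩
  have hq' : (aeval fun i : Fin n => esymm (Fin n) (Polynomial R) (i + 1)) q = h := by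
    have h2 := congrArg Subtype.val hq
    rwa [esymmAlgHom_apply] at h2
  rw [← hq']
  clear hq hq' hh
  induction q using MvPolynomial.induction_on with
  | C r =>
    rw [aeval_C, MvPolynomial.algebraMap_eq]
    have h3 : (Φ R n).symm (C r) = Polynomial.aeval (X (Fin.last n)) r := by
      rw [AlgEquiv.symm_apply_eq, Φ_aeval_C]
    rw [h3]
    exact InM_aeval_C r
  | add p q hp hq => rw [map_add, map_add]; exact InM_add hp hq
  | mul_X p i hp =>
    rw [map_mul, aeval_X, map_mul]
    refine InM_mul hp ?_
    have h4 : (Φ R n).symm (esymm (Fin n) (Polynomial R) ((i : ℕ) + 1)) = eps R n ((i : ℕ)+1) := by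
      rw [AlgEquiv.symm_apply_eq, Φ_eps]
    rw [h4]
    exact eps_mem (by have := i.2; omega)

end Eps

lemma symm_sum {R : Type*} [CommRing R] {n : ℕ} {ι : Type*} (s : Finset ι)
    (f : ι → MvPolynomial (Fin n) R) (h : ∀ i ∈ s, (f i).IsSymmetric) :
    (∑ i ∈ s, f i).IsSymmetric := fun e => by
  rw [map_sum]
  exact Finset.sum_congr rfl fun i hi => h i hi e

lemma map_C_mono {R : Type*} [CommRing R] {n : ℕ} (a : J n) :
    MvPolynomial.map (Polynomial.C : R →+* Polynomial R) (mono R a) = mono (Polynomial R) a := by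
  rw [mono, mono, map_prod]
  exact Finset.prod_congr rfl fun i _ => by rw [map_pow, map_X]

universe u

theorem gen : ∀ (n : ℕ) (R : Type u) [CommRing R] (f : MvPolynomial (Fin n) R),
    ∃ c : J n → MvPolynomial (Fin n) R,
      (∀ a, (c a).IsSymmetric) ∧ f = ∑ a, c a * mono R a := by
  intro n
  induction n with
  | zero =>
    intro R _ f
    refine ⟨fun _ => f, fun a e => ?_, ?_⟩
    · have he : ⇑e = id := funext fun x => x.elim0
      rw [he, rename_id, AlgHom.id_apply]
    · simp [mono]
  | succ n IH =>
    intro R _ f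
    obtain ⟨c', hsym', hF⟩ := IH (Polynomial R) (Φ R n f)
    have hMa : ∀ a : J n, InM R n ((Φ R n).symm (c' a)) := fun a => mem_of_symm_phi (hsym' a)
    choose s hs1 hs2 using hMa
    refine ⟨fun b => s ((eJ n b).1) ((eJ n b).2), fun b => hs1 _ _, ?_⟩
    have hterm : ∀ a : J n, (Φ R n).symm (c' a * mono (Polynomial R) a)
        = (Φ R n).symm (c' a) * rename Fin.castSucc (mono R a) := by
      intro a
      rw [map_mul]
      congr 1
      rw [AlgEquiv.symm_apply_eq, Φ_renameCastSucc, map_C_mono]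
    have key : ∑ b : J (n+1), s (eJ n b).1 (eJ n b).2 * mono R b
        = ∑ p : J n × Fin (n+1),
            s p.1 p.2 * (rename Fin.castSucc (mono R p.1) * X (Fin.last n) ^ ((p.2 : ℕ))) := by
      rw [← Equiv.sum_comp (eJ n).symm (fun b => s (eJ n b).1 (eJ n b).2 * mono R b)]
      refine Finset.sum_congr rfl fun p _ => ?_
      have hb : eJ n ((eJ n).symm p) = p := Equiv.apply_symm_apply _ _
      rw [mono_split ((eJ n).symm p), hb]
    calc f = (Φ R n).symm (Φ R n f) := (AlgEquiv.symm_apply_apply _ _).symm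
      _ = ∑ a : J n, (Φ R n).symm (c' a * mono (Polynomial R) a) := by rw [hF, map_sum]
      _ = ∑ a : J n, ∑ d : Fin (n+1),
            s a d * (rename Fin.castSucc (mono R a) * X (Fin.last n) ^ ((d : ℕ))) := by
          refine Finset.sum_congr rfl fun a _ => ?_
          rw [hterm a, hs2 a, Finset.sum_mul]
          exact Finset.sum_congr rfl fun d _ => by ring
      _ = ∑ p : J n × Fin (n+1),
            s p.1 p.2 * (rename Fin.castSucc (mono R p.1) * X (Fin.last n) ^ ((p.2 : ℕ))) :=
          (Fintype.sum_prod_type (f := fun p : J n × Fin (n+1) =>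
            s p.1 p.2 * (rename Fin.castSucc (mono R p.1) * X (Fin.last n) ^ ((p.2 : ℕ))))).symm
      _ = ∑ b : J (n+1), s (eJ n b).1 (eJ n b).2 * mono R b := key.symm

theorem indep : ∀ (n : ℕ) (R : Type u) [CommRing R] [IsDomain R]
    (c : J n → MvPolynomial (Fin n) R), (∀ a, (c a).IsSymmetric) →
    ∑ a, c a * mono R a = 0 → ∀ a, c a = 0 := by
  intro n
  induction n with
  | zero =>
    intro R _ _ c hc h a
    have hmono : mono R a = 1 := by simp [mono]
    have hsum : ∑ b : J 0, c b * mono R b = c a := by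
      rw [Finset.sum_eq_single a]
      · rw [hmono, mul_one]
      · intro b _ hb; exact absurd (Subsingleton.elim b a) hb
      · intro hb; exact absurd (Finset.mem_univ a) hb
    rw [hsum] at h
    exact h
  | succ n IH =>
    intro R _ _ c hc h
    have hp : ∑ p : J n × Fin (n+1), c ((eJ n).symm p)
          * (rename Fin.castSucc (mono R p.1) * X (Fin.last n) ^ ((p.2 : ℕ))) = 0 := by
      calc ∑ p : J n × Fin (n+1), c ((eJ n).symm p)
            * (rename Fin.castSucc (mono R p.1) * X (Fin.last n) ^ ((p.2 : ℕ)))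
          = ∑ b : J (n+1), c b * mono R b := by
            rw [← Equiv.sum_comp (eJ n).symm (fun b => c b * mono R b)]
            refine Finset.sum_congr rfl fun p _ => ?_
            have hb : eJ n ((eJ n).symm p) = p := Equiv.apply_symm_apply _ _
            rw [mono_split ((eJ n).symm p), hb]
        _ = 0 := h
    have h1 : ∑ a : J n, ∑ d : Fin (n+1), c ((eJ n).symm (a, d))
        * (rename Fin.castSucc (mono R a) * X (Fin.last n) ^ ((d : ℕ))) = 0 :=
      (Fintype.sum_prod_type (f := fun p : J n × Fin (n+1) => c ((eJ n).symm p)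
        * (rename Fin.castSucc (mono R p.1) * X (Fin.last n) ^ ((p.2 : ℕ))))).symm.trans hp
    set γ : J n → MvPolynomial (Fin n) (Polynomial R) :=
      fun a => ∑ d : Fin (n+1), Φ R n (c ((eJ n).symm (a, d))) * C (Polynomial.X ^ (d : ℕ))
      with hγdef
    have h2 : ∑ a : J n, γ a * mono (Polynomial R) a = 0 := by
      have h3 := congrArg (Φ R n) h1
      rw [map_zero, map_sum] at h3
      rw [← h3]
      refine Finset.sum_congr rfl fun a _ => ?_
      rw [map_sum, hγdef, Finset.sum_mul]
      refine Finset.sum_congr rfl fun d _ => ?_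
      rw [map_mul, map_mul, Φ_renameCastSucc, map_C_mono, Φ_Xlast_pow]
      ring
    have hγsym : ∀ a, (γ a).IsSymmetric := by
      intro a
      refine symm_sum _ _ fun d _ => ?_
      exact (IsSymmetric.phi (hc _)).mul (symm_C _ _ _)
    have hγ0 : ∀ a, γ a = 0 := IH (Polynomial R) γ hγsym h2
    have hz : ∀ (a : J n) (d : Fin (n+1)), c ((eJ n).symm (a, d)) = 0 := by
      intro a
      have h5 : Φ R n (∑ d : Fin (n+1), c ((eJ n).symm (a, d)) * X (Fin.last n) ^ ((d : ℕ)))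
          = γ a := by
        rw [map_sum, hγdef]
        refine Finset.sum_congr rfl fun d _ => ?_
        rw [map_mul, Φ_Xlast_pow]
      have h6 : ∑ d : Fin (n+1), c ((eJ n).symm (a, d)) * X (Fin.last n) ^ ((d : ℕ)) = 0 := by
        apply (Φ R n).injective
        rw [h5, map_zero, hγ0 a]
      exact swap_roots _ (fun d => hc _) h6
    intro b
    have h7 := hz (eJ n b).1 (eJ n b).2
    have h8 : ((eJ n b).1, (eJ n b).2) = eJ n b := rfl
    rw [h8, Equiv.symm_apply_apply] at h7
    exact h7

end FreeSym

open FreeSym in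
/-- The polynomial ring `k[x₁,…,x_n]` is a free module of rank `n!` over its subring of
symmetric polynomials: there exist `n!` polynomials `b_j` such that every polynomial is
uniquely a combination `Σ c_j · b_j` with symmetric coefficients `c_j`. -/
theorem polynomial_ring_free_over_symmetric
    (𝕜 : Type*) [Field 𝕜] (n : ℕ) :
    ∃ b : Fin (Nat.factorial n) → MvPolynomial (Fin n) 𝕜,
      ∀ f : MvPolynomial (Fin n) 𝕜,
        ∃! c : Fin (Nat.factorial n) → MvPolynomial (Fin n) 𝕜,
          (∀ j, (c j).IsSymmetric) ∧ f = ∑ j, c j * b j := by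
  classical
  have hcard : Fintype.card (Fin (Nat.factorial n)) = Fintype.card (J n) := by
    rw [Fintype.card_fin, card_J]
  let g : Fin (Nat.factorial n) ≃ J n := Fintype.equivOfCardEq hcard
  refine ⟨fun j => mono 𝕜 (g j), fun f => ?_⟩
  obtain ⟨c, hc, hf⟩ := gen n 𝕜 f
  have hexist : f = ∑ j, c (g j) * mono 𝕜 (g j) := by
    rw [hf, ← Equiv.sum_comp g (fun a => c a * mono 𝕜 a)]
  refine ⟨fun j => c (g j), ⟨fun j => hc _, hexist⟩, ?_⟩
  rintro y ⟨hy1, hy2⟩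
  have hD : ∀ a : J n, y (g.symm a) - c a = 0 := by
    apply indep n 𝕜 (fun a => y (g.symm a) - c a) (fun a => (hy1 _).sub (hc _))
    have e1 : ∑ a : J n, (y (g.symm a) - c a) * mono 𝕜 a
        = ∑ j, (y j - c (g j)) * mono 𝕜 (g j) := by
      rw [← Equiv.sum_comp g (fun a => (y (g.symm a) - c a) * mono 𝕜 a)]
      exact Finset.sum_congr rfl fun j _ => by rw [Equiv.symm_apply_apply]
    have e2 : ∑ j, (y j - c (g j)) * mono 𝕜 (g j)
        = (∑ j, y j * mono 𝕜 (g j)) - ∑ j, c (g j) * mono 𝕜 (g j) := by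
      rw [← Finset.sum_sub_distrib]
      exact Finset.sum_congr rfl fun j _ => by ring
    rw [e1, e2, ← hy2, ← hexist, sub_self]
  funext j
  have h9 := hD (g j)
  rw [Equiv.symm_apply_apply, sub_eq_zero] at h9
  exact h9
end

section
/- Let R = k[X₁,X₂]/(X₁X₂) over a field k of characteristic zero. In the arc ring J^∞(R), for every n ≥ 0 all coefficients of the series X₁(s)·(∂ⁿ X₂(s)/∂sⁿ) are nilpotent. Consequently, in the reduced arc ring J^∞_red(R), the products X₁^{(i)} X₂^{(j)} vanish for all i, j ≥ 0. -/
open MvPolynomial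

/-- The universal arc series `f(X₁(s),…)` of a polynomial `f`. -/
noncomputable def arcSeries {𝕜 : Type*} [CommRing 𝕜] {σ : Type*}
    (f : MvPolynomial σ 𝕜) : PowerSeries (MvPolynomial (σ × ℕ) 𝕜) :=
  MvPolynomial.aeval (fun i : σ => PowerSeries.mk fun j : ℕ => MvPolynomial.X (i, j)) f

/-- The `n`-th `s`-coefficient of the arc series of `f`. -/
noncomputable def arcCoeff {𝕜 : Type*} [CommRing 𝕜] {σ : Type*}
    (f : MvPolynomial σ 𝕜) (n : ℕ) : MvPolynomial (σ × ℕ) 𝕜 :=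
  PowerSeries.coeff n (arcSeries f)

/-- The defining ideal of the arc ring of `𝕜[Xᵢ]/(S)`. -/
noncomputable def arcIdeal {𝕜 : Type*} [CommRing 𝕜] {σ : Type*}
    (S : Set (MvPolynomial σ 𝕜)) : Ideal (MvPolynomial (σ × ℕ) 𝕜) :=
  Ideal.span {g | ∃ f ∈ S, ∃ n : ℕ, g = arcCoeff f n}

section Aux

variable {𝕜 : Type*} [CommRing 𝕜]

lemma arcSeries_X {σ : Type*} (i : σ) :
    arcSeries (X i : MvPolynomial σ 𝕜) = PowerSeries.mk fun j => X (i, j) := by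
  simp [arcSeries]

lemma arcCoeff_node (m : ℕ) :
    arcCoeff (X 0 * X 1 : MvPolynomial (Fin 2) 𝕜) m
      = ∑ p ∈ Finset.HasAntidiagonal.antidiagonal m, X ((0 : Fin 2), p.1) * X ((1 : Fin 2), p.2) := by
  unfold arcCoeff
  rw [show arcSeries (X 0 * X 1 : MvPolynomial (Fin 2) 𝕜)
      = arcSeries (X 0) * arcSeries (X 1) from map_mul _ _ _,
    arcSeries_X, arcSeries_X, PowerSeries.coeff_mul]
  simp

lemma arcCoeff_mem (m : ℕ) :
    arcCoeff (X 0 * X 1 : MvPolynomial (Fin 2) 𝕜) m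
      ∈ arcIdeal ({X 0 * X 1} : Set (MvPolynomial (Fin 2) 𝕜)) :=
  Ideal.subset_span ⟨X 0 * X 1, Set.mem_singleton _, m, rfl⟩

/-- The main nilpotency statement: every product `X₁^{(i)} X₂^{(j)}` lies in the
radical of the arc ideal of the node. -/
lemma key_mem (i j : ℕ) :
    (X ((0 : Fin 2), i) * X ((1 : Fin 2), j) : MvPolynomial (Fin 2 × ℕ) 𝕜)
      ∈ (arcIdeal ({X 0 * X 1} : Set (MvPolynomial (Fin 2) 𝕜))).radical := by
  set J := (arcIdeal ({X 0 * X 1} : Set (MvPolynomial (Fin 2) 𝕜))).radical with hJ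
  induction i using Nat.strong_induction_on generalizing j with
  | _ i ih1 =>
  induction j using Nat.strong_induction_on with
  | _ j ih2 =>
  have hmem : ((i, j) : ℕ × ℕ) ∈ Finset.HasAntidiagonal.antidiagonal (i + j) := by
    simp [Finset.HasAntidiagonal.mem_antidiagonal]
  have hc : (X ((0:Fin 2), i))^(i+j) * arcCoeff (X 0 * X 1 : MvPolynomial (Fin 2) 𝕜) (i+j) ∈ J :=
    Ideal.le_radical (Ideal.mul_mem_left _ _ (arcCoeff_mem (i+j)))
  rw [arcCoeff_node, Finset.mul_sum, ← Finset.add_sum_erase _ _ hmem] at hc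
  have hrest : ∑ p ∈ (Finset.HasAntidiagonal.antidiagonal (i+j)).erase (i, j),
      (X ((0:Fin 2), i))^(i+j) * (X ((0 : Fin 2), p.1) * X ((1 : Fin 2), p.2)) ∈ J := by
    refine Ideal.sum_mem _ fun p hp => ?_
    have hpe := Finset.mem_of_mem_erase hp
    rw [Finset.HasAntidiagonal.mem_antidiagonal] at hpe
    have hpne := Finset.ne_of_mem_erase hp
    rcases lt_trichotomy p.1 i with h | h | h
    · exact Ideal.mul_mem_left _ _ (ih1 p.1 h p.2)
    · exact absurd (Prod.ext h (by omega)) hpne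
    · -- here `p.1 > i`, so `p.2 < j` and `i + j ≥ 1`
      have hj : p.2 < j := by omega
      have : ((X ((0:Fin 2), i))^(i+j) * (X ((0 : Fin 2), p.1) * X ((1 : Fin 2), p.2))
            : MvPolynomial (Fin 2 × ℕ) 𝕜)
          = ((X ((0:Fin 2), i))^(i+j-1) * X ((0 : Fin 2), p.1))
            * (X ((0:Fin 2), i) * X ((1 : Fin 2), p.2)) := by
        conv_lhs => rw [show i + j = (i+j-1) + 1 by omega]
        ring
      rw [this]
      exact Ideal.mul_mem_left _ _ (ih2 p.2 hj)
  have ht : ((X ((0:Fin 2), i))^(i+j) * (X ((0 : Fin 2), i) * X ((1 : Fin 2), j))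
      : MvPolynomial (Fin 2 × ℕ) 𝕜) ∈ J := by
    have := Ideal.sub_mem _ hc hrest
    simpa using this
  have hpow : (X ((0:Fin 2), i) * X ((1 : Fin 2), j) : MvPolynomial (Fin 2 × ℕ) 𝕜)^(i+j+1)
      = ((X ((0:Fin 2), i))^(i+j) * (X ((0 : Fin 2), i) * X ((1 : Fin 2), j)))
        * (X ((1:Fin 2), j))^(i+j) := by ring
  exact Ideal.mem_radical_of_pow_mem (hJ ▸ (hpow ▸ Ideal.mul_mem_right _ _ ht))

lemma coeff_iter_deriv {R : Type*} [CommRing R] (f : ℕ → R) (n : ℕ) : ∀ b : ℕ,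
    ∃ c : ℕ, PowerSeries.coeff b
        ((fun g => PowerSeries.derivative (R := R) g)^[n] (PowerSeries.mk f))
      = (c : R) * f (b + n) := by
  induction n with
  | zero => intro b; exact ⟨1, by simp⟩
  | succ n ih =>
    intro b
    rw [Function.iterate_succ_apply']
    obtain ⟨c, hc⟩ := ih (b + 1)
    refine ⟨c * (b + 1), ?_⟩
    simp only [PowerSeries.coeff_derivative, hc]
    push_cast
    rw [show b + 1 + n = b + (n + 1) by omega]
    ring

end Aux

/-- For `R = k[X₁,X₂]/(X₁X₂)` over a field `k` of characteristic zero, in the arc ring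
`J^∞(R)` all coefficients of `X₁(s) · ∂ⁿX₂(s)/∂sⁿ` are nilpotent (lie in the radical
of the arc ideal) for every `n ≥ 0`; consequently all products `X₁^{(i)} X₂^{(j)}`
vanish in the reduced arc ring. -/
theorem two_axes_arc_nilpotents (𝕜 : Type*) [Field 𝕜] [CharZero 𝕜] :
    (∀ n i : ℕ,
      PowerSeries.coeff i
        (arcSeries (X (0 : Fin 2) : MvPolynomial (Fin 2) 𝕜) *
          (fun g => PowerSeries.derivative (R := MvPolynomial (Fin 2 × ℕ) 𝕜) g)^[n]
            (arcSeries (X (1 : Fin 2)))) ∈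
        (arcIdeal ({X 0 * X 1} : Set (MvPolynomial (Fin 2) 𝕜))).radical) ∧
    (∀ i j : ℕ,
      (MvPolynomial.X ((0 : Fin 2), i) * MvPolynomial.X ((1 : Fin 2), j) :
          MvPolynomial (Fin 2 × ℕ) 𝕜) ∈
        (arcIdeal ({X 0 * X 1} : Set (MvPolynomial (Fin 2) 𝕜))).radical) := by
  refine ⟨fun n i => ?_, fun i j => key_mem i j⟩
  rw [arcSeries_X, arcSeries_X, PowerSeries.coeff_mul]
  refine Ideal.sum_mem _ fun p hp => ?_
  obtain ⟨c, hc⟩ := coeff_iter_deriv (R := MvPolynomial (Fin 2 × ℕ) 𝕜)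
    (fun j => X ((1 : Fin 2), j)) n p.2
  rw [PowerSeries.coeff_mk, hc]
  have : (X ((0:Fin 2), p.1) * ((c : MvPolynomial (Fin 2 × ℕ) 𝕜) * X ((1:Fin 2), p.2 + n))
      : MvPolynomial (Fin 2 × ℕ) 𝕜)
      = (c : MvPolynomial (Fin 2 × ℕ) 𝕜) * (X ((0:Fin 2), p.1) * X ((1:Fin 2), p.2 + n)) := by
    ring
  rw [this]
  exact Ideal.mul_mem_left _ _ (key_mem p.1 (p.2 + n))
end

section
/- Let R = k[X₁,…,X_m]/(f₁,…,f_l) be a finitely generated k-algebra. Define J^∞(R) = k[X_i^{(j)}]/(coefficients of f_k(X₁(s),…,X_m(s))). Then for every commutative k-algebra A there is a natural bijection Hom_{k-alg}(J^∞(R), A) ≅ Hom_{k-alg}(R, A[[s]]). -/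
open MvPolynomial

section
variable {𝕜 : Type*} [CommRing 𝕜] {σ : Type*} {A : Type*} [CommRing A] [Algebra 𝕜 A]

lemma arc_key (G : MvPolynomial (σ × ℕ) 𝕜 →ₐ[𝕜] A) (f : MvPolynomial σ 𝕜) :
    MvPolynomial.aeval (fun i : σ => PowerSeries.mk fun j : ℕ => G (X (i, j))) f =
      PowerSeries.map G.toRingHom (arcSeries f) := by
  induction f using MvPolynomial.induction_on with
  | C a =>
      simp [arcSeries, PowerSeries.algebraMap_apply, algebraMap_eq]
  | add p q hp hq => simp [arcSeries, hp, hq]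
  | mul_X p i hp =>
      simp only [map_mul, hp, arcSeries, aeval_X]
      refine congrArg _ (PowerSeries.ext fun n => ?_)
      simp

lemma arc_coeff_key (G : MvPolynomial (σ × ℕ) 𝕜 →ₐ[𝕜] A) (f : MvPolynomial σ 𝕜) (n : ℕ) :
    PowerSeries.coeff n
        (MvPolynomial.aeval (fun i : σ => PowerSeries.mk fun j : ℕ => G (X (i, j))) f) =
      G (arcCoeff f n) := by
  rw [arc_key]; simp [arcCoeff]

end

set_option maxHeartbeats 2000000 in
/-- Universal property of the arc ring: for `R = 𝕜[X₁,…,X_m]/I` and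
`J^∞(R) = 𝕜[X_i^{(j)}]/(arc ideal of I)`, for every commutative `𝕜`-algebra `A` there
is a bijection `Hom(J^∞(R), A) ≅ Hom(R, A[[s]])`, under which `ι' : J^∞(R) → A`
corresponds to the homomorphism `R → A[[s]]` sending `X_i` to `Σ_j ι'(X_i^{(j)}) s^j`. -/
theorem arc_ring_universal_property
    (𝕜 : Type*) [Field 𝕜] (m : ℕ) (I : Ideal (MvPolynomial (Fin m) 𝕜))
    (A : Type*) [CommRing A] [Algebra 𝕜 A] :
    ∃ e : ((MvPolynomial (Fin m × ℕ) 𝕜 ⧸ arcIdeal (I : Set (MvPolynomial (Fin m) 𝕜)))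
            →ₐ[𝕜] A) ≃
          ((MvPolynomial (Fin m) 𝕜 ⧸ I) →ₐ[𝕜] PowerSeries A),
      ∀ g (i : Fin m),
        e g (Ideal.Quotient.mk I (X i)) =
          PowerSeries.mk fun j : ℕ =>
            g (Ideal.Quotient.mk (arcIdeal (I : Set (MvPolynomial (Fin m) 𝕜)))
                (MvPolynomial.X (i, j))) := by
  set J := arcIdeal (I : Set (MvPolynomial (Fin m) 𝕜)) with hJ
  have hgen : ∀ f ∈ I, ∀ n : ℕ, arcCoeff f n ∈ J := by
    intro f hf n
    exact Ideal.subset_span ⟨f, hf, n, rfl⟩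
  -- forward direction
  have hto : ∀ g : (MvPolynomial (Fin m × ℕ) 𝕜 ⧸ J) →ₐ[𝕜] A, ∀ f ∈ I,
      (MvPolynomial.aeval
        (fun i : Fin m => PowerSeries.mk fun j : ℕ =>
          g (Ideal.Quotient.mk J (X (i, j))))) f = 0 := by
    intro g f hf
    ext n
    have := arc_coeff_key (g.comp (Ideal.Quotient.mkₐ 𝕜 J)) f n
    simp only [AlgHom.comp_apply, Ideal.Quotient.mkₐ_eq_mk] at this
    rw [this]
    simp [Ideal.Quotient.eq_zero_iff_mem.mpr (hgen f hf n)]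
  let toF : ((MvPolynomial (Fin m × ℕ) 𝕜 ⧸ J) →ₐ[𝕜] A) →
      ((MvPolynomial (Fin m) 𝕜 ⧸ I) →ₐ[𝕜] PowerSeries A) := fun g =>
    Ideal.Quotient.liftₐ I
      (MvPolynomial.aeval
        (fun i : Fin m => PowerSeries.mk fun j : ℕ =>
          g (Ideal.Quotient.mk J (X (i, j))))) (hto g)
  -- backward direction
  have hinv : ∀ h : (MvPolynomial (Fin m) 𝕜 ⧸ I) →ₐ[𝕜] PowerSeries A, ∀ a ∈ J,
      (MvPolynomial.aeval
        (fun p : Fin m × ℕ =>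
          PowerSeries.coeff p.2 (h (Ideal.Quotient.mk I (X p.1))))) a = 0 := by
    intro h a ha
    set G : MvPolynomial (Fin m × ℕ) 𝕜 →ₐ[𝕜] A :=
      MvPolynomial.aeval
        (fun p : Fin m × ℕ =>
          PowerSeries.coeff p.2 (h (Ideal.Quotient.mk I (X p.1)))) with hG
    show G a = 0
    have hsub : J ≤ RingHom.ker G.toRingHom := by
      rw [hJ, arcIdeal, Ideal.span_le]
      rintro _ ⟨f, hf, n, rfl⟩
      have key : (MvPolynomial.aeval
          (fun i : Fin m => PowerSeries.mk fun j : ℕ => G (X (i, j)))) f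
            = h (Ideal.Quotient.mk I f) := by
        have harg : (fun i : Fin m => PowerSeries.mk fun j : ℕ => G (X (i, j)))
            = fun i : Fin m => h (Ideal.Quotient.mk I (X i)) := by
          funext i
          ext j
          simp [hG]
        calc (MvPolynomial.aeval
            (fun i : Fin m => PowerSeries.mk fun j : ℕ => G (X (i, j)))) f
            = (MvPolynomial.aeval
                (fun i : Fin m => h (Ideal.Quotient.mk I (X i)))) f := by
              rw [harg]
          _ = ((h.comp (Ideal.Quotient.mkₐ 𝕜 I)).comp
                (MvPolynomial.aeval X)) f := by
              rw [MvPolynomial.comp_aeval]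
              simp
          _ = h (Ideal.Quotient.mk I f) := by simp
      have := arc_coeff_key G f n
      rw [key] at this
      have hz : h (Ideal.Quotient.mk I f) = 0 := by
        simp [Ideal.Quotient.eq_zero_iff_mem.mpr hf]
      simp only [RingHom.mem_ker, SetLike.mem_coe]
      show G (arcCoeff f n) = 0
      rw [← this, hz]
      simp
    exact hsub ha
  let invF : ((MvPolynomial (Fin m) 𝕜 ⧸ I) →ₐ[𝕜] PowerSeries A) →
      ((MvPolynomial (Fin m × ℕ) 𝕜 ⧸ J) →ₐ[𝕜] A) := fun h =>
    Ideal.Quotient.liftₐ J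
      (MvPolynomial.aeval
        (fun p : Fin m × ℕ =>
          PowerSeries.coeff p.2 (h (Ideal.Quotient.mk I (X p.1))))) (hinv h)
  have htoF_X : ∀ g (i : Fin m), toF g (Ideal.Quotient.mk I (X i)) =
      PowerSeries.mk fun j : ℕ => g (Ideal.Quotient.mk J (X (i, j))) := by
    intro g i
    simp [toF]
    exact aeval_X _ _
  have hinvF_X : ∀ h (p : Fin m × ℕ), invF h (Ideal.Quotient.mk J (X p)) =
      PowerSeries.coeff p.2 (h (Ideal.Quotient.mk I (X p.1))) := by
    intro h p
    simp [invF]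
    exact aeval_X _ _
  refine ⟨⟨toF, invF, ?_, ?_⟩, htoF_X⟩
  · intro g
    apply Ideal.Quotient.algHom_ext
    apply MvPolynomial.algHom_ext
    intro p
    simp only [AlgHom.comp_apply, Ideal.Quotient.mkₐ_eq_mk]
    rw [hinvF_X, htoF_X]
    simp
  · intro h
    apply Ideal.Quotient.algHom_ext
    apply MvPolynomial.algHom_ext
    intro i
    simp only [AlgHom.comp_apply, Ideal.Quotient.mkₐ_eq_mk]
    rw [htoF_X]
    ext j
    rw [PowerSeries.coeff_mk, hinvF_X]
end

section
/- Let R be a finitely generated commutative k-algebra and for r ∈ R, j ≥ 0 let r^{(j)} ∈ J^∞(R) denote the j-th arc coefficient (so that the map r ↦ r(s) = Σ r^{(j)} s^j is the universal homomorphism R → J^∞(R)[[s]]). Then for each k ≥ −1 there is a well-defined derivation d_k of J^∞(R) satisfying d_k(r^{(i)}) = (i−k)·r^{(i−k)} (with r^{(i−k)} = 0 if i < k), and the assignment s^{k+1}∂/∂s ↦ −d_k defines a Lie algebra action of the Lie algebra of continuous derivations of k[[s]] on J^∞(R). -/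
set_option synthInstance.maxHeartbeats 1000000
set_option maxHeartbeats 1000000

open MvPolynomial

namespace ArcAux

open PowerSeries

variable {𝕜 : Type*} [CommRing 𝕜] {σ : Type*}

/-- Coefficientwise lift of a derivation to power series. -/
noncomputable def liftPS {A : Type*} [CommRing A] [Algebra 𝕜 A]
    (d : Derivation 𝕜 A A) : Derivation 𝕜 (PowerSeries A) (PowerSeries A) where
  toLinearMap :=
    { toFun := fun F => PowerSeries.mk fun n => d (PowerSeries.coeff (R := A) n F)
      map_add' := fun F G => by ext n; simp
      map_smul' := fun c F => by ext n; simp }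
  map_one_eq_zero' := by
    ext n
    simp only [LinearMap.coe_mk, AddHom.coe_mk, coeff_mk, map_zero]
    rw [PowerSeries.coeff_one]
    split <;> simp
  leibniz' := fun F G => by
    ext n
    have key : ∀ p : ℕ × ℕ, d (PowerSeries.coeff (R := A) p.1 F * PowerSeries.coeff (R := A) p.2 G)
        = PowerSeries.coeff (R := A) p.1 F * d (PowerSeries.coeff (R := A) p.2 G) + PowerSeries.coeff (R := A) p.2 G * d (PowerSeries.coeff (R := A) p.1 F) := by
      intro p; rw [Derivation.leibniz]; simp [smul_eq_mul]
    simp only [LinearMap.coe_mk, AddHom.coe_mk, coeff_mk, PowerSeries.coeff_mul, map_sum,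
      smul_eq_mul, map_add, key]
    rw [Finset.sum_add_distrib]
    congr 1
    rw [← Finset.Nat.sum_antidiagonal_swap
      (f := fun p => PowerSeries.coeff (R := A) p.1 G * d (PowerSeries.coeff (R := A) p.2 F))]
    simp only [Prod.fst_swap, Prod.snd_swap]

@[simp] lemma coeff_liftPS {A : Type*} [CommRing A] [Algebra 𝕜 A]
    (d : Derivation 𝕜 A A) (F : PowerSeries A) (n : ℕ) :
    PowerSeries.coeff (R := A) n (liftPS d F) = d (PowerSeries.coeff (R := A) n F) := by
  simp [liftPS]

/-- The polynomial-level derivation `d_k`. -/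
noncomputable def dpoly (k : ℤ) :
    Derivation 𝕜 (MvPolynomial (σ × ℕ) 𝕜) (MvPolynomial (σ × ℕ) 𝕜) :=
  MvPolynomial.mkDerivation 𝕜 fun q : σ × ℕ =>
    if k ≤ (q.2 : ℤ) then ((q.2 : ℤ) - k) • X (q.1, ((q.2 : ℤ) - k).toNat) else 0

lemma dpoly_X (k : ℤ) (q : σ × ℕ) :
    dpoly (𝕜 := 𝕜) k (X q)
      = if k ≤ (q.2 : ℤ) then ((q.2 : ℤ) - k) • X (q.1, ((q.2 : ℤ) - k).toNat) else 0 :=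
  MvPolynomial.mkDerivation_X _ _ _

/-- Coefficients of `X^(k+1) * F'`. -/
lemma coeff_XpowDeriv {A : Type*} [CommRing A] (k : ℤ) (hk : -1 ≤ k)
    (F : PowerSeries A) (n : ℕ) :
    PowerSeries.coeff (R := A) n ((PowerSeries.X : PowerSeries A) ^ (k + 1).toNat * (d⁄dX A F))
      = if k ≤ (n : ℤ) then ((n : ℤ) - k) • PowerSeries.coeff (R := A) (((n : ℤ) - k).toNat) F else 0 := by
  rw [coeff_X_pow_mul', coeff_derivative]
  have hm : ((k + 1).toNat : ℤ) = k + 1 := Int.toNat_of_nonneg (by omega)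
  by_cases h : (k + 1).toNat ≤ n
  · rw [if_pos h, if_pos (by omega)]
    have h1 : n - (k + 1).toNat + 1 = ((n : ℤ) - k).toNat := by omega
    have h2 : ((((n : ℤ) - k).toNat : ℤ)) = (n : ℤ) - k := Int.toNat_of_nonneg (by omega)
    rw [h1, zsmul_eq_mul, mul_comm]
    congr 1
    rw [← h2, Int.cast_natCast, ← h1, Nat.cast_add, Nat.cast_one]
  · rw [if_neg h]
    by_cases h2 : k ≤ (n : ℤ)
    · rw [if_pos h2]
      have : (n : ℤ) - k = 0 := by omega
      rw [this]
      simp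
    · rw [if_neg h2]

/-- The key computation: `dpoly k` acts on arc coefficients as expected. -/
theorem dpoly_arcCoeff (k : ℤ) (hk : -1 ≤ k) (p : MvPolynomial σ 𝕜) (i : ℕ) :
    dpoly (𝕜 := 𝕜) k (arcCoeff p i)
      = if k ≤ (i : ℤ) then ((i : ℤ) - k) • arcCoeff p (((i : ℤ) - k).toNat) else 0 := by
  set A := MvPolynomial (σ × ℕ) 𝕜
  set φ : σ → PowerSeries A := fun i' => PowerSeries.mk fun j : ℕ => X (i', j) with hφ
  have hgen : ∀ i' : σ, liftPS (dpoly (𝕜 := 𝕜) k) (φ i')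
      = (PowerSeries.X : PowerSeries A) ^ (k + 1).toNat * (d⁄dX A (φ i')) := by
    intro i'
    ext n
    rw [coeff_liftPS, coeff_XpowDeriv k hk]
    simp only [hφ, coeff_mk, dpoly_X]
  have main : liftPS (dpoly (𝕜 := 𝕜) k) (arcSeries p)
      = (PowerSeries.X : PowerSeries A) ^ (k + 1).toNat * (d⁄dX A (arcSeries p)) := by
    unfold arcSeries
    induction p using MvPolynomial.induction_on with
    | C a =>
        rw [MvPolynomial.aeval_C]
        rw [Derivation.map_algebraMap, PowerSeries.algebraMap_apply,
          PowerSeries.derivative_C, mul_zero]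
    | add p q hp hq =>
        rw [map_add, map_add, map_add, hp, hq, mul_add]
    | mul_X p i' hp =>
        rw [map_mul, MvPolynomial.aeval_X, Derivation.leibniz, Derivation.leibniz, hp,
          hgen i', smul_eq_mul, smul_eq_mul, smul_eq_mul, smul_eq_mul, mul_add]
        ring
  have := congrArg (fun F => PowerSeries.coeff (R := A) i F) main
  simp only [coeff_liftPS] at this
  rw [show dpoly (𝕜 := 𝕜) k (arcCoeff p i) = dpoly (𝕜 := 𝕜) k (PowerSeries.coeff (R := A) i (arcSeries p)) from rfl,
    this, coeff_XpowDeriv k hk]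
  rfl

/-- `dpoly k` preserves the arc ideal. -/
theorem dpoly_mem_arcIdeal (k : ℤ) (hk : -1 ≤ k) (S : Set (MvPolynomial σ 𝕜))
    {x : MvPolynomial (σ × ℕ) 𝕜} (hx : x ∈ arcIdeal S) :
    dpoly (𝕜 := 𝕜) k x ∈ arcIdeal S := by
  unfold arcIdeal at hx ⊢
  refine Submodule.span_induction ?_ ?_ ?_ ?_ hx
  · rintro g ⟨f, hf, n, rfl⟩
    rw [dpoly_arcCoeff k hk]
    split
    · refine zsmul_mem (Ideal.subset_span ?_) _
      exact ⟨f, hf, _, rfl⟩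
    · exact Submodule.zero_mem _
  · simp
  · intro a b _ _ ha hb
    rw [map_add]; exact Submodule.add_mem _ ha hb
  · intro a x hxmem hdx
    rw [smul_eq_mul, Derivation.leibniz, smul_eq_mul, smul_eq_mul]
    exact Submodule.add_mem _ (Ideal.mul_mem_left _ _ hdx) (Ideal.mul_mem_right _ _ hxmem)

end ArcAux

/-- For `R = 𝕜[X₁,…,X_m]/I` with arc ring `J^∞(R)`, for each `k ≥ −1` there is a
derivation `d_k` of `J^∞(R)` with `d_k(r^{(i)}) = (i−k) · r^{(i−k)}` (zero when
`i < k`), where `r^{(i)}` is the `i`-th arc coefficient of (any representative of)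
`r ∈ R`; moreover `[d_k, d_l] = (k−l) d_{k+l}`, so `s^{k+1}∂/∂s ↦ −d_k` defines an
action of the Lie algebra of continuous derivations of `𝕜[[s]]` on `J^∞(R)`. -/
theorem witt_action_on_arc_ring
    (𝕜 : Type*) [Field 𝕜] (m : ℕ) (I : Ideal (MvPolynomial (Fin m) 𝕜)) :
    ∃ D : ℤ → Derivation 𝕜
        (MvPolynomial (Fin m × ℕ) 𝕜 ⧸ arcIdeal (I : Set (MvPolynomial (Fin m) 𝕜)))
        (MvPolynomial (Fin m × ℕ) 𝕜 ⧸ arcIdeal (I : Set (MvPolynomial (Fin m) 𝕜))),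
      (∀ k : ℤ, -1 ≤ k → ∀ (p : MvPolynomial (Fin m) 𝕜) (i : ℕ),
        D k (Ideal.Quotient.mk _ (arcCoeff p i)) =
          if k ≤ (i : ℤ) then
            ((i : ℤ) - k) •
              Ideal.Quotient.mk (arcIdeal (I : Set (MvPolynomial (Fin m) 𝕜)))
                (arcCoeff p ((i : ℤ) - k).toNat)
          else 0) ∧
      (∀ k l : ℤ, -1 ≤ k → -1 ≤ l →
        ∀ x, D k (D l x) - D l (D k x) = (k - l) • D (k + l) x) := by
  classical
  set J : Ideal (MvPolynomial (Fin m × ℕ) 𝕜) :=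
    arcIdeal (I : Set (MvPolynomial (Fin m) 𝕜)) with hJ
  set Q := MvPolynomial (Fin m × ℕ) 𝕜 ⧸ J with hQ
  set mkq : MvPolynomial (Fin m × ℕ) 𝕜 →ₐ[𝕜] Q := Ideal.Quotient.mkₐ 𝕜 J with hmkq
  have hsurj : Function.Surjective mkq := Ideal.Quotient.mkₐ_surjective 𝕜 J
  -- lift the derivations to the quotient
  have hcond : ∀ k : ℤ, -1 ≤ k → ∀ x : MvPolynomial (Fin m × ℕ) 𝕜,
      mkq x = 0 → mkq (ArcAux.dpoly (𝕜 := 𝕜) k x) = 0 := by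
    intro k hk x hx
    rw [Ideal.Quotient.mkₐ_eq_mk, Ideal.Quotient.eq_zero_iff_mem] at hx ⊢
    exact ArcAux.dpoly_mem_arcIdeal k hk _ hx
  set D : ℤ → Derivation 𝕜 Q Q := fun k =>
    if hk : -1 ≤ k then
      Derivation.liftOfSurjective (f := mkq) hsurj (d := ArcAux.dpoly (𝕜 := 𝕜) k) (hcond k hk)
    else 0 with hD
  have happ : ∀ k : ℤ, -1 ≤ k → ∀ x : MvPolynomial (Fin m × ℕ) 𝕜,
      D k (mkq x) = mkq (ArcAux.dpoly (𝕜 := 𝕜) k x) := by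
    intro k hk x
    rw [hD]
    simp only [dif_pos hk]
    exact Derivation.liftOfSurjective_apply hsurj (hcond k hk) x
  have prop1 : ∀ k : ℤ, -1 ≤ k → ∀ (p : MvPolynomial (Fin m) 𝕜) (i : ℕ),
      D k (Ideal.Quotient.mk J (arcCoeff p i)) =
        if k ≤ (i : ℤ) then
          ((i : ℤ) - k) • Ideal.Quotient.mk J (arcCoeff p (((i : ℤ) - k).toNat))
        else 0 := by
    intro k hk p i
    have : Ideal.Quotient.mk J (arcCoeff p i) = mkq (arcCoeff p i) := rfl
    rw [this, happ k hk, ArcAux.dpoly_arcCoeff k hk]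
    split
    · rw [map_zsmul]; rfl
    · rw [map_zero]
  refine ⟨D, prop1, ?_⟩
  intro k l hk hl x
  by_cases hkl : k = l
  · subst hkl
    simp [sub_self]
  have hkl' : -1 ≤ k + l := by omega
  -- the generator function
  set G : Fin m → ℤ → Q := fun a t =>
    if 0 ≤ t then Ideal.Quotient.mk J (arcCoeff (X a) t.toNat) else 0 with hG
  have hDG : ∀ (κ : ℤ), -1 ≤ κ → ∀ (a : Fin m) (t : ℤ),
      D κ (G a t) = (t - κ) • G a (t - κ) := by
    intro κ hκ a t
    by_cases ht : 0 ≤ t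
    · rw [hG]
      simp only [if_pos ht]
      rw [prop1 κ hκ (X a) t.toNat]
      have htn : (t.toNat : ℤ) = t := Int.toNat_of_nonneg ht
      by_cases h2 : κ ≤ t
      · rw [if_pos (by omega), htn, if_pos (by omega)]
      · rw [if_neg (by omega), if_neg (by omega), smul_zero]
    · rw [hG]
      simp only [if_neg ht, map_zero]
      by_cases h3 : 0 ≤ t - κ
      · have : t - κ = 0 := by omega
        rw [this, zero_smul]
      · rw [if_neg h3, smul_zero]
  -- derivations agreeing on generators agree everywhere
  have hbr : ⁅D k, D l⁆ = ((k - l : ℤ)) • D (k + l) := by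
    apply Derivation.ext_of_adjoin_eq_top
      (s := Set.range fun q : Fin m × ℕ => mkq (MvPolynomial.X q))
    · have h1 : (Set.range fun q : Fin m × ℕ => mkq (MvPolynomial.X q))
          = mkq '' (Set.range (MvPolynomial.X : Fin m × ℕ → MvPolynomial (Fin m × ℕ) 𝕜)) := by
        rw [← Set.range_comp]; rfl
      rw [h1, ← AlgHom.map_adjoin, MvPolynomial.adjoin_range_X, Algebra.map_top]
      rw [← AlgHom.range_eq_top] at hsurj
      exact hsurj
    · rintro y ⟨⟨a, j⟩, rfl⟩
      have hXg : mkq (MvPolynomial.X (a, j)) = G a (j : ℤ) := by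
        rw [hG]
        simp only [if_pos (Int.ofNat_nonneg j)]
        have : arcCoeff (X a : MvPolynomial (Fin m) 𝕜) j = MvPolynomial.X (a, j) := by
          simp [arcCoeff, arcSeries, MvPolynomial.aeval_X, PowerSeries.coeff_mk]
        rw [Int.toNat_natCast, this]
        rfl
      simp only [Derivation.commutator_apply, Derivation.smul_apply]
      rw [hXg,
        hDG l hl a (j : ℤ), hDG k hk a (j : ℤ), map_zsmul, map_zsmul,
        hDG k hk a _, hDG l hl a _, hDG (k + l) hkl' a (j : ℤ)]
      rw [smul_smul, smul_smul, smul_smul]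
      have e1 : (j : ℤ) - l - k = (j : ℤ) - (k + l) := by ring
      have e2 : (j : ℤ) - k - l = (j : ℤ) - (k + l) := by ring
      rw [e1, e2, ← sub_smul]
      congr 1
      ring
  have := congrArg (fun E => E x) hbr
  simpa [Derivation.commutator_apply, Derivation.smul_apply] using this
end

section
/- Let l ≥ 2 and let R(𝒞_l) be the toric ring of the unit cube [0,1]^l, generated by Y_I for I ⊆ [l] subject to the relations Y_I Y_J = Y_{I∩J} Y_{I∪J}. Then for every 0 ≤ k ≤ l−2, all coefficients of the series W_{l,k} = Σ_{I ⊆ [2,l]} (−1)^{|I|} Y_{I∪{1}}(s) · ∂^k Y_{[2,l]∖I}(s)/∂s^k are nilpotent in the arc ring J^∞(R(𝒞_l)). -/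
open MvPolynomial

open Finset

section CubeArcAux

noncomputable def der (R : Type*) [CommRing R] : PowerSeries R → PowerSeries R :=
  fun g => PowerSeries.derivative (R := R) g

variable {R : Type*} [CommRing R]

lemma der_mul (p q : PowerSeries R) : der R (p * q) = p * der R q + q * der R p := by
  simp [der, Derivation.leibniz, smul_eq_mul]

lemma der_sum {ι : Type*} (s : Finset ι) (f : ι → PowerSeries R) :
    der R (∑ i ∈ s, f i) = ∑ i ∈ s, der R (f i) :=
  map_sum (PowerSeries.derivative (R := R)) f s

lemma der_nsmul (n : ℕ) (p : PowerSeries R) : der R (n • p) = n • der R p :=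
  map_nsmul (PowerSeries.derivative (R := R)) n p

lemma der_zero : der R 0 = 0 := map_zero (PowerSeries.derivative (R := R))

lemma iter_der_zero (n : ℕ) : (der R)^[n] 0 = 0 := by
  induction n with
  | zero => rfl
  | succ n IH => rw [Function.iterate_succ_apply', IH, der_zero]

lemma iter_der_mul (n : ℕ) (p q : PowerSeries R) :
    (der R)^[n] (p * q) =
      ∑ m ∈ range (n + 1), n.choose m • ((der R)^[n - m] p * (der R)^[m] q) := by
  induction n with
  | zero => simp
  | succ n IH =>
    have step2 : (der R)^[n + 1] (p * q) =
        (∑ m ∈ range (n + 1), n.choose m • ((der R)^[n - m] p * (der R)^[m + 1] q)) +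
          ∑ m ∈ range (n + 1), n.choose m • ((der R)^[n - m + 1] p * (der R)^[m] q) := by
      rw [Function.iterate_succ_apply', IH, der_sum]
      simp_rw [der_nsmul, der_mul, ← Function.iterate_succ_apply', smul_add, sum_add_distrib]
      congr 1
      exact sum_congr rfl fun m _ => by rw [mul_comm ((der R)^[m] q)]
    have hB : (∑ m ∈ range (n + 1), n.choose m • ((der R)^[n - m + 1] p * (der R)^[m] q)) =
        (∑ m ∈ range (n + 1), n.choose (m + 1) • ((der R)^[n - m] p * (der R)^[m + 1] q)) +
          ((der R)^[n + 1] p * (der R)^[0] q) := by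
      rw [sum_range_succ' (fun m => n.choose m • ((der R)^[n - m + 1] p * (der R)^[m] q)) n]
      rw [sum_range_succ (fun m => n.choose (m + 1) • ((der R)^[n - m] p * (der R)^[m + 1] q)) n]
      rw [Nat.choose_succ_self, zero_smul, add_zero, Nat.choose_zero_right, one_smul,
        Nat.sub_zero]
      congr 1
      refine sum_congr rfl fun m hm => ?_
      rw [mem_range] at hm
      have h2 : n - (m + 1) + 1 = n - m := by omega
      rw [h2]
    rw [step2, hB, sum_range_succ' (fun m => (n+1).choose m •
      ((der R)^[n + 1 - m] p * (der R)^[m] q)) (n + 1), Nat.choose_zero_right, one_smul,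
      Nat.sub_zero]
    simp_rw [Nat.choose_succ_succ, Nat.succ_sub_succ, add_smul, sum_add_distrib]
    abel

lemma alt_sum_zero {α : Type*} [DecidableEq α] {A : Type*} [CommRing A]
    (S : Finset α) (hS : S.Nonempty) :
    (∑ I ∈ S.powerset, (-1 : A) ^ I.card) = 0 := by
  have h := Finset.sum_powerset_neg_one_pow_card_of_nonempty (x := S) hS
  have h2 := congrArg (fun z : ℤ => (z : A)) h
  push_cast at h2
  simpa using h2

noncomputable def Vv {l : ℕ} (y : Finset (Fin l) → PowerSeries R) (x0 : Fin l)
    (S B : Finset (Fin l)) (k : ℕ) : PowerSeries R :=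
  ∑ I ∈ S.powerset, (-1 : PowerSeries R) ^ I.card *
    (y (insert x0 I) * (der R)^[k] (y (B \ I)))

lemma key {l : ℕ} (y : Finset (Fin l) → PowerSeries R)
    (hrel : ∀ A B : Finset (Fin l), y A * y B = y (A ∩ B) * y (A ∪ B)) (x0 : Fin l) :
    ∀ k S B, S ⊆ B → x0 ∉ B → k < S.card →
      y ∅ ^ k * y {x0} ^ k * Vv y x0 S B k = 0 := by
  intro k
  induction k using Nat.strong_induction_on with
  | _ k ih =>
  intro S B hSB hx0B hk
  cases k with
  | zero =>
    have hS : S.Nonempty := card_pos.mp hk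
    simp only [pow_zero, one_mul]
    unfold Vv
    calc ∑ I ∈ S.powerset, (-1 : PowerSeries R)^I.card *
            (y (insert x0 I) * (der R)^[0] (y (B \ I)))
        = ∑ I ∈ S.powerset, (-1 : PowerSeries R)^I.card * (y ∅ * y (insert x0 B)) := by
          refine sum_congr rfl fun I hI => ?_
          rw [mem_powerset] at hI
          have hIB : I ⊆ B := hI.trans hSB
          have e1 : (insert x0 I) ∩ (B \ I) = ∅ := by
            ext a
            simp only [mem_inter, mem_insert, mem_sdiff, notMem_empty, iff_false]
            rintro ⟨rfl | haI, haB, hnaI⟩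
            · exact hx0B haB
            · exact hnaI haI
          have e2 : (insert x0 I) ∪ (B \ I) = insert x0 B := by
            ext a
            simp only [mem_union, mem_insert, mem_sdiff]
            constructor
            · rintro ((rfl | haI) | ⟨haB, _⟩)
              · exact Or.inl rfl
              · exact Or.inr (hIB haI)
              · exact Or.inr haB
            · rintro (rfl | haB)
              · exact Or.inl (Or.inl rfl)
              · by_cases haI : a ∈ I
                · exact Or.inl (Or.inr haI)
                · exact Or.inr ⟨haB, haI⟩
          rw [Function.iterate_zero_apply, hrel (insert x0 I) (B \ I), e1, e2]
      _ = (∑ I ∈ S.powerset, (-1 : PowerSeries R)^I.card) * (y ∅ * y (insert x0 B)) := by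
          rw [sum_mul]
      _ = 0 := by rw [alt_sum_zero S hS, zero_mul]
  | succ n =>
    obtain ⟨j, hjS⟩ : S.Nonempty := card_pos.mp (Nat.lt_of_lt_of_le (Nat.zero_lt_succ n) hk.le)
    have hjB : j ∈ B := hSB hjS
    have hjx0 : j ≠ x0 := fun h => hx0B (h ▸ hjB)
    set S' := S.erase j with hS'def
    set B' := B.erase j with hB'def
    have hjS' : j ∉ S' := notMem_erase _ _
    have hjB' : j ∉ B' := notMem_erase _ _
    have hSins : S = insert j S' := (insert_erase hjS).symm
    have hS'B' : S' ⊆ B' := erase_subset_erase _ hSB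
    have hS'B : S' ⊆ B := (erase_subset _ _).trans hSB
    have hx0B' : x0 ∉ B' := fun h => hx0B (mem_of_mem_erase h)
    have hcS' : n < S'.card := by
      rw [hS'def, card_erase_of_mem hjS]; omega
    have perI : ∀ I, I ⊆ S' →
        y ∅ * y {x0} *
          ((-1 : PowerSeries R)^I.card *
              (y (insert x0 I) * (der R)^[n+1] (y (B \ I)))
            + (-1 : PowerSeries R)^(insert j I).card *
              (y (insert x0 (insert j I)) * (der R)^[n+1] (y (B \ insert j I))))
        = (-1 : PowerSeries R)^I.card * (y {x0} * (y (insert x0 I) *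
            ((∑ m ∈ range (n+1), ((n+1).choose m : PowerSeries R) *
                ((der R)^[n+1-m] (y {j}) * (der R)^[m] (y (B' \ I))))
           - (∑ m ∈ range (n+1), ((n+1).choose m : PowerSeries R) *
                ((der R)^[n+1-m] (y ∅) * (der R)^[m] (y (B \ I))))))) := by
      intro I hI
      have hjI : j ∉ I := fun h => hjS' (hI h)
      have hIB : I ⊆ B := hI.trans hS'B
      have hx0I : x0 ∉ I := fun h => hx0B (hIB h)
      have s1 : B \ insert j I = B' \ I := by
        ext a
        simp only [mem_sdiff, mem_insert, mem_erase, hB'def]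
        constructor
        · rintro ⟨haB, hna⟩
          push_neg at hna
          exact ⟨⟨hna.1, haB⟩, hna.2⟩
        · rintro ⟨⟨hja, haB⟩, hnaI⟩
          refine ⟨haB, ?_⟩
          push_neg
          exact ⟨hja, hnaI⟩
      have hr2 : y ∅ * y (B \ I) = y {j} * y (B' \ I) := by
        have h := hrel {j} (B' \ I)
        have e1 : ({j} : Finset (Fin l)) ∩ (B' \ I) = ∅ := by
          ext a
          simp only [mem_inter, mem_singleton, mem_sdiff, notMem_empty, iff_false]
          rintro ⟨rfl, haB', _⟩
          exact hjB' haB'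
        have e2 : ({j} : Finset (Fin l)) ∪ (B' \ I) = B \ I := by
          ext a
          simp only [mem_union, mem_singleton, mem_sdiff, mem_erase, hB'def]
          constructor
          · rintro (rfl | ⟨⟨_, haB⟩, hnaI⟩)
            · exact ⟨hjB, hjI⟩
            · exact ⟨haB, hnaI⟩
          · rintro ⟨haB, hnaI⟩
            by_cases haj : a = j
            · exact Or.inl haj
            · exact Or.inr ⟨⟨haj, haB⟩, hnaI⟩
        rw [e1, e2] at h
        exact h.symm
      have hL : (der R)^[n+1] (y ∅ * y (B \ I)) =
          (∑ m ∈ range (n+1), ((n+1).choose m : PowerSeries R) *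
              ((der R)^[n+1-m] (y ∅) * (der R)^[m] (y (B \ I))))
            + y ∅ * (der R)^[n+1] (y (B \ I)) := by
        rw [iter_der_mul (n+1) (y ∅) (y (B \ I)), sum_range_succ]
        simp only [Nat.choose_self, Nat.sub_self, Function.iterate_zero_apply, one_smul,
          nsmul_eq_mul]
      have hR : (der R)^[n+1] (y {j} * y (B' \ I)) =
          (∑ m ∈ range (n+1), ((n+1).choose m : PowerSeries R) *
              ((der R)^[n+1-m] (y {j}) * (der R)^[m] (y (B' \ I))))
            + y {j} * (der R)^[n+1] (y (B' \ I)) := by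
        rw [iter_der_mul (n+1) (y {j}) (y (B' \ I)), sum_range_succ]
        simp only [Nat.choose_self, Nat.sub_self, Function.iterate_zero_apply, one_smul,
          nsmul_eq_mul]
      have hC0 : (∑ m ∈ range (n+1), ((n+1).choose m : PowerSeries R) *
              ((der R)^[n+1-m] (y ∅) * (der R)^[m] (y (B \ I))))
            + y ∅ * (der R)^[n+1] (y (B \ I)) =
          (∑ m ∈ range (n+1), ((n+1).choose m : PowerSeries R) *
              ((der R)^[n+1-m] (y {j}) * (der R)^[m] (y (B' \ I))))
            + y {j} * (der R)^[n+1] (y (B' \ I)) := by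
        rw [← hL, ← hR, hr2]
      have hr13 : y ∅ * (y {x0} * y (insert x0 (insert j I))) =
          y (insert x0 I) * (y {x0} * y {j}) := by
        have h1 := hrel (insert x0 I) {x0, j}
        have e4 : (insert x0 I) ∩ ({x0, j} : Finset (Fin l)) = {x0} := by
          ext a
          simp only [mem_inter, mem_insert, mem_singleton]
          constructor
          · rintro ⟨rfl | haI, h2⟩
            · rfl
            · rcases h2 with rfl | rfl
              · rfl
              · exact absurd haI hjI
          · rintro rfl
            exact ⟨Or.inl rfl, Or.inl rfl⟩
        have e5 : (insert x0 I) ∪ ({x0, j} : Finset (Fin l)) = insert x0 (insert j I) := by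
          ext a
          simp only [mem_union, mem_insert, mem_singleton]
          tauto
        rw [e4, e5] at h1
        have h3 := hrel {x0} {j}
        have e6 : ({x0} : Finset (Fin l)) ∩ {j} = ∅ := by
          ext a
          simp only [mem_inter, mem_singleton, notMem_empty, iff_false, not_and]
          rintro rfl rfl
          exact hjx0 rfl
        have e7 : ({x0} : Finset (Fin l)) ∪ {j} = ({x0, j} : Finset (Fin l)) := rfl
        rw [e6, e7] at h3
        linear_combination (-(y ∅)) * h1 - y (insert x0 I) * h3
      rw [s1, card_insert_of_notMem hjI, pow_succ]
      linear_combination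
        ((-1 : PowerSeries R)^I.card * y {x0} * y (insert x0 I)) * hC0
          - ((-1 : PowerSeries R)^I.card * (der R)^[n+1] (y (B' \ I))) * hr13

    have hV : Vv y x0 S B (n+1) =
        ∑ I ∈ S'.powerset,
          ((-1 : PowerSeries R)^I.card * (y (insert x0 I) * (der R)^[n+1] (y (B \ I)))
          + (-1 : PowerSeries R)^(insert j I).card *
              (y (insert x0 (insert j I)) * (der R)^[n+1] (y (B \ insert j I)))) := by
      unfold Vv
      rw [hSins, sum_powerset_insert hjS', ← sum_add_distrib]
    have H1 : y ∅ * y {x0} * Vv y x0 S B (n+1) =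
        ∑ I ∈ S'.powerset, (-1 : PowerSeries R)^I.card * (y {x0} * (y (insert x0 I) *
            ((∑ m ∈ range (n+1), ((n+1).choose m : PowerSeries R) *
                ((der R)^[n+1-m] (y {j}) * (der R)^[m] (y (B' \ I))))
           - (∑ m ∈ range (n+1), ((n+1).choose m : PowerSeries R) *
                ((der R)^[n+1-m] (y ∅) * (der R)^[m] (y (B \ I))))))) := by
      rw [hV, mul_sum]
      exact sum_congr rfl fun I hI => perI I (mem_powerset.mp hI)
    have sumswap : ∀ (B'' : Finset (Fin l)) (u : ℕ → PowerSeries R),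
        (∑ I ∈ S'.powerset, (-1 : PowerSeries R)^I.card * (y {x0} * (y (insert x0 I) *
            (∑ m ∈ range (n+1), ((n+1).choose m : PowerSeries R) *
               (u m * (der R)^[m] (y (B'' \ I)))))))
        = ∑ m ∈ range (n+1), ((n+1).choose m : PowerSeries R) *
            (y {x0} * u m * Vv y x0 S' B'' m) := by
      intro B'' u
      calc (∑ I ∈ S'.powerset, (-1 : PowerSeries R)^I.card * (y {x0} * (y (insert x0 I) *
              (∑ m ∈ range (n+1), ((n+1).choose m : PowerSeries R) *
                 (u m * (der R)^[m] (y (B'' \ I)))))))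
          = ∑ I ∈ S'.powerset, ∑ m ∈ range (n+1),
              (-1 : PowerSeries R)^I.card * (y {x0} * (y (insert x0 I) *
                (((n+1).choose m : PowerSeries R) * (u m * (der R)^[m] (y (B'' \ I)))))) := by
            refine sum_congr rfl fun I _ => ?_
            rw [mul_sum, mul_sum, mul_sum]
        _ = ∑ m ∈ range (n+1), ∑ I ∈ S'.powerset,
              (-1 : PowerSeries R)^I.card * (y {x0} * (y (insert x0 I) *
                (((n+1).choose m : PowerSeries R) * (u m * (der R)^[m] (y (B'' \ I)))))) :=
            sum_comm
        _ = ∑ m ∈ range (n+1), ((n+1).choose m : PowerSeries R) *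
              (y {x0} * u m * Vv y x0 S' B'' m) := by
            refine sum_congr rfl fun m _ => ?_
            unfold Vv
            simp only [mul_sum]
            refine sum_congr rfl fun I _ => by ring
    have hzero : ∀ (B'' : Finset (Fin l)), S' ⊆ B'' → x0 ∉ B'' → ∀ m ∈ range (n+1),
        y ∅ ^ n * y {x0} ^ n * Vv y x0 S' B'' m = 0 := by
      intro B'' hsub hx0'' m hm
      rw [mem_range] at hm
      have h0 := ih m (by omega) S' B'' hsub hx0'' (by omega)
      have hsplit : ∀ z : PowerSeries R, z ^ n = z ^ (n - m) * z ^ m := fun z => by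
        rw [← pow_add]
        congr 1
        omega
      calc y ∅ ^ n * y {x0} ^ n * Vv y x0 S' B'' m
          = y ∅ ^ (n-m) * y {x0} ^ (n-m) * (y ∅ ^ m * y {x0} ^ m * Vv y x0 S' B'' m) := by
            rw [hsplit (y ∅), hsplit (y {x0})]; ring
        _ = 0 := by rw [h0, mul_zero]
    calc y ∅ ^ (n+1) * y {x0} ^ (n+1) * Vv y x0 S B (n+1)
        = y ∅ ^ n * y {x0} ^ n * (y ∅ * y {x0} * Vv y x0 S B (n+1)) := by ring
      _ = y ∅ ^ n * y {x0} ^ n *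
          ((∑ I ∈ S'.powerset, (-1 : PowerSeries R)^I.card * (y {x0} * (y (insert x0 I) *
            (∑ m ∈ range (n+1), ((n+1).choose m : PowerSeries R) *
                ((der R)^[n+1-m] (y {j}) * (der R)^[m] (y (B' \ I)))))))
          - (∑ I ∈ S'.powerset, (-1 : PowerSeries R)^I.card * (y {x0} * (y (insert x0 I) *
            (∑ m ∈ range (n+1), ((n+1).choose m : PowerSeries R) *
                ((der R)^[n+1-m] (y ∅) * (der R)^[m] (y (B \ I)))))))) := by
          rw [H1, ← sum_sub_distrib]
          congr 1
          exact sum_congr rfl fun I _ => by ring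
      _ = y ∅ ^ n * y {x0} ^ n *
          ((∑ m ∈ range (n+1), ((n+1).choose m : PowerSeries R) *
              (y {x0} * (fun m => (der R)^[n+1-m] (y {j})) m * Vv y x0 S' B' m))
          - (∑ m ∈ range (n+1), ((n+1).choose m : PowerSeries R) *
              (y {x0} * (fun m => (der R)^[n+1-m] (y ∅)) m * Vv y x0 S' B m))) := by
          rw [sumswap B' (fun m => (der R)^[n+1-m] (y {j})),
            sumswap B (fun m => (der R)^[n+1-m] (y ∅))]
      _ = 0 := by
          rw [mul_sub, mul_sum, mul_sum]
          rw [sum_eq_zero, sum_eq_zero, sub_zero]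
          · intro m hm
            have h0 := hzero B hS'B hx0B m hm
            calc y ∅ ^ n * y {x0} ^ n * (((n+1).choose m : PowerSeries R) *
                  (y {x0} * (fun m => (der R)^[n+1-m] (y ∅)) m * Vv y x0 S' B m))
                = ((n+1).choose m : PowerSeries R) * (y {x0} * (der R)^[n+1-m] (y ∅)) *
                  (y ∅ ^ n * y {x0} ^ n * Vv y x0 S' B m) := by ring
              _ = 0 := by rw [h0, mul_zero]
          · intro m hm
            have h0 := hzero B' hS'B' hx0B' m hm
            calc y ∅ ^ n * y {x0} ^ n * (((n+1).choose m : PowerSeries R) *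
                  (y {x0} * (fun m => (der R)^[n+1-m] (y {j})) m * Vv y x0 S' B' m))
                = ((n+1).choose m : PowerSeries R) * (y {x0} * (der R)^[n+1-m] (y {j})) *
                  (y ∅ ^ n * y {x0} ^ n * Vv y x0 S' B' m) := by ring
              _ = 0 := by rw [h0, mul_zero]

lemma V_eq_zero {R : Type*} [CommRing R] [IsDomain R] {l : ℕ}
    (y : Finset (Fin l) → PowerSeries R)
    (hrel : ∀ A B : Finset (Fin l), y A * y B = y (A ∩ B) * y (A ∪ B)) (x0 : Fin l)
    (E : Finset (Fin l)) (hx0E : x0 ∉ E) (k : ℕ) (hk : k < E.card) :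
    Vv y x0 E E k = 0 := by
  have hmain := key y hrel x0 k E E subset_rfl hx0E hk
  by_cases h0 : y ∅ = 0
  · unfold Vv
    refine sum_eq_zero fun I hI => ?_
    rw [mem_powerset] at hI
    have e1 : (insert x0 I) ∩ (E \ I) = ∅ := by
      ext a
      simp only [mem_inter, mem_insert, mem_sdiff, notMem_empty, iff_false]
      rintro ⟨rfl | haI, haB, hnaI⟩
      · exact hx0E haB
      · exact hnaI haI
    have e2 : (insert x0 I) ∪ (E \ I) = insert x0 E := by
      ext a
      simp only [mem_union, mem_insert, mem_sdiff]
      constructor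
      · rintro ((rfl | haI) | ⟨haB, _⟩)
        · exact Or.inl rfl
        · exact Or.inr (hI haI)
        · exact Or.inr haB
      · rintro (rfl | haB)
        · exact Or.inl (Or.inl rfl)
        · by_cases haI : a ∈ I
          · exact Or.inl (Or.inr haI)
          · exact Or.inr ⟨haB, haI⟩
    have hp : y (insert x0 I) * y (E \ I) = 0 := by
      rw [hrel, e1, e2, h0, zero_mul]
    rcases mul_eq_zero.mp hp with h | h
    · rw [h, zero_mul, mul_zero]
    · rw [h, iter_der_zero, mul_zero, mul_zero]
  · by_cases h1 : y {x0} = 0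
    · unfold Vv
      refine sum_eq_zero fun I hI => ?_
      rw [mem_powerset] at hI
      have hx0I : x0 ∉ I := fun h => hx0E (hI h)
      have hp : y ∅ * y (insert x0 I) = 0 := by
        have h := hrel {x0} I
        rw [singleton_inter_of_notMem hx0I, ← insert_eq, h1, zero_mul] at h
        exact h.symm
      have h2 : y (insert x0 I) = 0 := (mul_eq_zero.mp hp).resolve_left h0
      rw [h2, zero_mul, mul_zero]
    · have hne : y ∅ ^ k * y {x0} ^ k ≠ 0 :=
        mul_ne_zero (pow_ne_zero _ h0) (pow_ne_zero _ h1)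
      rcases mul_eq_zero.mp hmain with h | h
      · exact absurd h hne
      · exact h

section maps
variable {R S : Type*} [CommRing R] [CommRing S] (φ : R →+* S)

lemma map_der (f : PowerSeries R) :
    PowerSeries.map φ (der R f) = der S (PowerSeries.map φ f) := by
  ext n
  simp [der, PowerSeries.coeff_map, PowerSeries.coeff_derivative]

lemma map_iter_der (k : ℕ) (f : PowerSeries R) :
    PowerSeries.map φ ((der R)^[k] f) = (der S)^[k] (PowerSeries.map φ f) := by
  induction k with
  | zero => rfl
  | succ k IH => rw [Function.iterate_succ_apply', Function.iterate_succ_apply', map_der, IH]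

end maps

end CubeArcAux

/-- Let `R(𝒞_l)` (for `l ≥ 2`) be the toric ring of the unit cube `[0,1]^l`, generated
by `Y_I`, `I ⊆ [l]`, subject to `Y_I Y_J = Y_{I∩J} Y_{I∪J}`.  For every `0 ≤ k ≤ l−2`,
all coefficients of the series
`W_{l,k} = Σ_{I ⊆ [2,l]} (−1)^{|I|} Y_{I∪{1}}(s) · ∂^k Y_{[2,l]∖I}(s)/∂s^k`
are nilpotent in `J^∞(R(𝒞_l))`, i.e. lie in the radical of the arc ideal of the
binomial relations. -/
theorem cube_arc_series_nilpotent (𝕜 : Type*) [Field 𝕜] [CharZero 𝕜]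
    (l : ℕ) (hl : 2 ≤ l) (k : ℕ) (hk : k ≤ l - 2) :
    ∀ n : ℕ,
      PowerSeries.coeff n
        (∑ I ∈ ((Finset.univ : Finset (Fin l)).erase ⟨0, by omega⟩).powerset,
          (-1 : PowerSeries (MvPolynomial (Finset (Fin l) × ℕ) 𝕜)) ^ I.card *
            (arcSeries (X (insert (⟨0, by omega⟩ : Fin l) I)) *
              (fun g => PowerSeries.derivative
                  (R := MvPolynomial (Finset (Fin l) × ℕ) 𝕜) g)^[k]
                (arcSeries (X (((Finset.univ : Finset (Fin l)).erase ⟨0, by omega⟩) \ I))))) ∈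
        (arcIdeal {g : MvPolynomial (Finset (Fin l)) 𝕜 |
          ∃ I J : Finset (Fin l), g = X I * X J - X (I ∩ J) * X (I ∪ J)}).radical := by
  intro n
  rw [Ideal.radical_eq_sInf]
  refine Ideal.mem_sInf.mpr ?_
  rintro p ⟨hIp, hprime⟩
  haveI := hprime
  have hEcard : (((Finset.univ : Finset (Fin l)).erase ⟨0, by omega⟩)).card = l - 1 := by
    rw [card_erase_of_mem (mem_univ _), card_univ, Fintype.card_fin]
  have hrel : ∀ A B : Finset (Fin l),
      PowerSeries.map (Ideal.Quotient.mk p)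
          (arcSeries (X A : MvPolynomial (Finset (Fin l)) 𝕜)) *
        PowerSeries.map (Ideal.Quotient.mk p) (arcSeries (X B)) =
      PowerSeries.map (Ideal.Quotient.mk p) (arcSeries (X (A ∩ B))) *
        PowerSeries.map (Ideal.Quotient.mk p) (arcSeries (X (A ∪ B))) := by
    intro A B
    have hz : PowerSeries.map (Ideal.Quotient.mk p)
        (arcSeries ((X A * X B - X (A ∩ B) * X (A ∪ B) : MvPolynomial (Finset (Fin l)) 𝕜))) = 0 := by
      ext m
      rw [PowerSeries.coeff_map]
      simp only [map_zero]
      refine Ideal.Quotient.eq_zero_iff_mem.mpr (hIp ?_)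
      exact Ideal.subset_span ⟨_, ⟨A, B, rfl⟩, m, rfl⟩
    have hsub : arcSeries ((X A * X B - X (A ∩ B) * X (A ∪ B) : MvPolynomial (Finset (Fin l)) 𝕜))
        = arcSeries (X A) * arcSeries (X B) -
          arcSeries (X (A ∩ B) : MvPolynomial (Finset (Fin l)) 𝕜) * arcSeries (X (A ∪ B)) := by
      unfold arcSeries
      rw [map_sub, map_mul, map_mul]
    rw [hsub, map_sub, map_mul, map_mul, sub_eq_zero] at hz
    exact hz
  have main : PowerSeries.map (Ideal.Quotient.mk p)
      (∑ I ∈ ((Finset.univ : Finset (Fin l)).erase ⟨0, by omega⟩).powerset,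
        (-1 : PowerSeries (MvPolynomial (Finset (Fin l) × ℕ) 𝕜)) ^ I.card *
          (arcSeries (X (insert (⟨0, by omega⟩ : Fin l) I)) *
            (der (MvPolynomial (Finset (Fin l) × ℕ) 𝕜))^[k]
              (arcSeries (X (((Finset.univ : Finset (Fin l)).erase ⟨0, by omega⟩) \ I))))) = 0 := by
    have hW : PowerSeries.map (Ideal.Quotient.mk p)
        (∑ I ∈ ((Finset.univ : Finset (Fin l)).erase ⟨0, by omega⟩).powerset,
          (-1 : PowerSeries (MvPolynomial (Finset (Fin l) × ℕ) 𝕜)) ^ I.card *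
            (arcSeries (X (insert (⟨0, by omega⟩ : Fin l) I)) *
              (der (MvPolynomial (Finset (Fin l) × ℕ) 𝕜))^[k]
                (arcSeries (X (((Finset.univ : Finset (Fin l)).erase ⟨0, by omega⟩) \ I))))) =
        Vv (fun A => PowerSeries.map (Ideal.Quotient.mk p)
              (arcSeries (X A : MvPolynomial (Finset (Fin l)) 𝕜)))
          ⟨0, by omega⟩ ((Finset.univ : Finset (Fin l)).erase ⟨0, by omega⟩)
          ((Finset.univ : Finset (Fin l)).erase ⟨0, by omega⟩) k := by
      rw [map_sum]
      unfold Vv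
      refine sum_congr rfl fun I _ => ?_
      rw [map_mul, map_mul, map_pow, map_neg, map_one, map_iter_der]
    rw [hW]
    exact V_eq_zero _ hrel _ _ (notMem_erase _ _) k (by rw [hEcard]; omega)
  have hc := congrArg (PowerSeries.coeff n) main
  rw [PowerSeries.coeff_map] at hc
  simp only [map_zero] at hc
  exact Ideal.Quotient.eq_zero_iff_mem.mp hc
end

section
/- Let 𝕁_n = k[X_i^{(j)} : 1 ≤ i ≤ n, j ≥ 0] be the arc ring of a polynomial ring, graded by ℕⁿ with X_i^{(j)} in degree ε_i. For ā ∈ ℕⁿ, the graded dual of the component 𝕁_n[ā] is linearly isomorphic to the ring Λ_ā of polynomials in variables s_i^{(j)} (1 ≤ i ≤ n, 1 ≤ j ≤ a_i) invariant under 𝔖_{a₁} × ⋯ × 𝔖_{a_n} permuting the variables within each group, via ξ ↦ (ξ ⊗ 1)(X₁(s₁^{(1)})⋯X₁(s₁^{(a₁)})⋯X_n(s_n^{(1)})⋯X_n(s_n^{(a_n)})). -/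
open MvPolynomial

/-!
Expanding `∏_{i,l} X_i(s_i^{(l)}) = ∑_c (∏_{i,l} X_i^{(c(i,l))}) s^c`, the coefficient of `s^c` is
the basis monomial of `𝕁_n[ā]` whose `i`-th multiset of upper indices is `{c(i,l)}_l`, so `ξ` is
sent to `∑_c ξ({c(i,l)}_l) s^c`. This sum is finite because the grading of that monomial is the
total degree of `s^c`, and it is partially symmetric because two exponent vectors have the same
group multisets exactly when they differ by a permutation within each group (sort both).
Conversely a polynomial is partially symmetric iff its coefficients only depend on the group
multisets, and every tuple of multisets occurs, which gives the inverse map.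
-/

theorem Fin.exists_perm_eq_comp_of_map_univ_eq {α : Type*} [LinearOrder α] {m : ℕ}
    {u v : Fin m → α} (h : Finset.univ.val.map u = Finset.univ.val.map v) :
    ∃ σ : Equiv.Perm (Fin m), v = u ∘ σ := by
  rw [Fin.univ_val_map, Fin.univ_val_map, Multiset.coe_eq_coe] at h
  have hsorted : u ∘ Tuple.sort u = v ∘ Tuple.sort v :=
    List.ofFn_injective <| List.Perm.eq_of_sortedLE
      (Tuple.monotone_sort u).sortedLE_ofFn (Tuple.monotone_sort v).sortedLE_ofFn
      (((Tuple.sort u).ofFn_comp_perm u).trans (h.trans ((Tuple.sort v).ofFn_comp_perm v).symm))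
  refine ⟨(Tuple.sort v).symm.trans (Tuple.sort u), funext fun l => ?_⟩
  simpa using (congrFun hsorted ((Tuple.sort v).symm l)).symm

theorem Multiset.exists_map_univ_eq {α : Type*} {m : ℕ} (s : Multiset α)
    (hs : Multiset.card s = m) : ∃ u : Fin m → α, Finset.univ.val.map u = s := by
  obtain rfl : s.toList.length = m := by rw [Multiset.length_toList, hs]
  exact ⟨s.toList.get, by rw [Fin.univ_val_map, List.ofFn_get, Multiset.coe_toList]⟩

namespace ArcComponent

variable {R : Type*} [CommSemiring R] {n : ℕ} {a : Fin n → ℕ}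

variable (a) in
/-- The monomial `∏_{i} ∏_{j ∈ bᵢ} X_i^{(j)}` of `𝕁_n[ā]` is encoded by the multisets `bᵢ`. -/
abbrev Monomial := (i : Fin n) → {b : Multiset ℕ // Multiset.card b = a i}

def Monomial.grad (bb : Monomial a) : ℕ := ∑ i, (bb i : Multiset ℕ).sum

variable (R a) in
def Dual := {ξ : Monomial a → R // ∃ N : ℕ, ∀ bb : Monomial a, N ≤ bb.grad → ξ bb = 0}

def IsPartiallySymmetric (f : MvPolynomial ((i : Fin n) × Fin (a i)) R) : Prop :=
  ∀ σ : (i : Fin n) → Equiv.Perm (Fin (a i)),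
    rename (fun p : (i : Fin n) × Fin (a i) => ⟨p.1, σ p.1 p.2⟩) f = f

def groupExponents (c : ((i : Fin n) × Fin (a i)) →₀ ℕ) : Monomial a :=
  fun i => ⟨Multiset.map (fun l : Fin (a i) => c ⟨i, l⟩) Finset.univ.val, by simp⟩

theorem groupExponents_surjective : Function.Surjective (groupExponents (a := a)) := by
  intro bb
  choose u hu using fun i => (bb i).1.exists_map_univ_eq (bb i).2
  exact ⟨Finsupp.equivFunOnFinite.symm fun p => u p.1 p.2, funext fun i => Subtype.ext (hu i)⟩

theorem groupExponents_eq_iff {c c' : ((i : Fin n) × Fin (a i)) →₀ ℕ} :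
    groupExponents c = groupExponents c' ↔
      ∃ σ : (i : Fin n) → Equiv.Perm (Fin (a i)), ⇑c' = c ∘ Equiv.sigmaCongrRight σ := by
  simp only [groupExponents, funext_iff, Subtype.mk.injEq]
  constructor
  · intro h
    choose σ hσ using fun i => Fin.exists_perm_eq_comp_of_map_univ_eq (h i)
    exact ⟨σ, fun p => congrFun (hσ p.1) p.2⟩
  · rintro ⟨σ, hσ⟩ i
    simp only [hσ, Function.comp_apply, Equiv.sigmaCongrRight_apply]
    rw [Fin.univ_val_map, Fin.univ_val_map, Multiset.coe_eq_coe]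
    exact ((σ i).ofFn_comp_perm fun l => c ⟨i, l⟩).symm

theorem grad_groupExponents (c : ((i : Fin n) × Fin (a i)) →₀ ℕ) :
    (groupExponents c).grad = c.degree := by
  rw [Finsupp.degree_eq_sum, ← Finset.univ_sigma_univ, Finset.sum_sigma]
  rfl

theorem IsPartiallySymmetric.coeff_eq {f : MvPolynomial ((i : Fin n) × Fin (a i)) R}
    (hf : IsPartiallySymmetric f) {c c' : ((i : Fin n) × Fin (a i)) →₀ ℕ}
    (h : groupExponents c = groupExponents c') : coeff c f = coeff c' f := by
  obtain ⟨σ, hσ⟩ := groupExponents_eq_iff.1 h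
  set e := Equiv.sigmaCongrRight σ
  have hc' : c' = Finsupp.mapDomain e.symm c := by
    ext p
    rw [Finsupp.mapDomain_equiv_apply, e.symm_symm, hσ, Function.comp_apply]
  have hfe : rename e.symm f = f := by
    rw [Equiv.sigmaCongrRight_symm]; exact hf fun i => (σ i).symm
  rw [hc', ← coeff_rename_mapDomain _ e.symm.injective f c, hfe]

theorem isPartiallySymmetric_iff {f : MvPolynomial ((i : Fin n) × Fin (a i)) R} :
    IsPartiallySymmetric f ↔ ∀ c c' : ((i : Fin n) × Fin (a i)) →₀ ℕ,
      groupExponents c = groupExponents c' → coeff c f = coeff c' f := by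
  refine ⟨fun hf _ _ => hf.coeff_eq, fun h σ => ?_⟩
  set e := Equiv.sigmaCongrRight σ
  change rename e f = f
  ext d
  obtain ⟨d, rfl⟩ := (Finsupp.equivCongrLeft e).surjective d
  rw [Finsupp.equivCongrLeft_apply, Finsupp.equivMapDomain_eq_mapDomain,
    coeff_rename_mapDomain _ e.injective]
  refine h _ _ (groupExponents_eq_iff.2 ⟨σ, funext fun p => ?_⟩).symm
  rw [Function.comp_apply, Finsupp.mapDomain_equiv_apply, e.symm_apply_apply]

namespace Dual

theorem finite_support_comp_groupExponents (ξ : Dual R a) :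
    (Function.support fun c : ((i : Fin n) × Fin (a i)) →₀ ℕ =>
      ξ.1 (groupExponents c)).Finite := by
  obtain ⟨N, hN⟩ := ξ.2
  refine (Finsupp.finite_of_degree_lt N).subset fun c hc => ?_
  by_contra hNc
  exact hc (hN _ (by rw [grad_groupExponents]; exact not_lt.1 hNc))

noncomputable def toMvPolynomial (ξ : Dual R a) : MvPolynomial ((i : Fin n) × Fin (a i)) R :=
  .ofCoeff <| Finsupp.ofSupportFinite _ ξ.finite_support_comp_groupExponents

theorem coeff_toMvPolynomial (ξ : Dual R a) (c : ((i : Fin n) × Fin (a i)) →₀ ℕ) :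
    coeff c ξ.toMvPolynomial = ξ.1 (groupExponents c) :=
  rfl

theorem isPartiallySymmetric_toMvPolynomial (ξ : Dual R a) :
    IsPartiallySymmetric ξ.toMvPolynomial :=
  isPartiallySymmetric_iff.2 fun c c' h => by
    rw [coeff_toMvPolynomial, coeff_toMvPolynomial, h]

noncomputable def ofMvPolynomial (f : MvPolynomial ((i : Fin n) × Fin (a i)) R) : Dual R a :=
  ⟨fun bb => coeff (Function.surjInv groupExponents_surjective bb) f, f.totalDegree + 1,
    fun bb hbb => coeff_eq_zero_of_totalDegree_lt <| by
      rw [← Finsupp.degree_apply, ← grad_groupExponents,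
        Function.surjInv_eq groupExponents_surjective]
      omega⟩

end Dual

variable (R a) in
noncomputable def dualEquivPartiallySymmetric :
    Dual R a ≃ {f : MvPolynomial ((i : Fin n) × Fin (a i)) R // IsPartiallySymmetric f} where
  toFun ξ := ⟨ξ.toMvPolynomial, ξ.isPartiallySymmetric_toMvPolynomial⟩
  invFun f := Dual.ofMvPolynomial f.1
  left_inv ξ := Subtype.ext <| funext fun bb => by
    simp only [Dual.ofMvPolynomial, Dual.coeff_toMvPolynomial,
      Function.surjInv_eq groupExponents_surjective]
  right_inv f := Subtype.ext <| MvPolynomial.ext _ _ fun c =>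
    (Dual.coeff_toMvPolynomial _ c).trans
      (f.2.coeff_eq (Function.surjInv_eq groupExponents_surjective _))

theorem coeff_dualEquivPartiallySymmetric (ξ : Dual R a) (c : ((i : Fin n) × Fin (a i)) →₀ ℕ) :
    coeff c (dualEquivPartiallySymmetric R a ξ).1 = ξ.1 (groupExponents c) :=
  rfl

end ArcComponent

open ArcComponent in
/-- The degree-`ā` component `𝕁_n[ā]` of the arc ring of a polynomial ring has
monomial basis indexed by tuples of multisets `(bᵢ)ᵢ` with `|bᵢ| = aᵢ` (the multiset
`bᵢ` records the upper indices of the chosen arc variables `X_i^{(j)}` in group `i`).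
Its graded dual (functionals supported in finitely many `grad`-degrees, where
`grad = Σᵢ Σ_{j∈bᵢ} j`) is linearly isomorphic to the ring `Λ_ā` of polynomials in
variables `s_i^{(j)}` (`1 ≤ j ≤ aᵢ`) symmetric within each group, via
`ξ ↦ (ξ ⊗ 1)(∏_{i,j} X_i(s_i^{(j)}))`; concretely, the coefficient of the symmetric
polynomial at an exponent vector `c` equals the value of `ξ` at the monomial whose
`i`-th multiset of upper indices is the multiset of exponents `{c(i,l)}_l`. -/
theorem arc_component_dual_is_partially_symmetric
    (𝕜 : Type*) [Field 𝕜] (n : ℕ) (a : Fin n → ℕ) :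
    ∃ e : {ξ : ((i : Fin n) → {b : Multiset ℕ // Multiset.card b = a i}) → 𝕜 //
            ∃ N : ℕ, ∀ bb : (i : Fin n) → {b : Multiset ℕ // Multiset.card b = a i},
              N ≤ (∑ i : Fin n, ((bb i : Multiset ℕ)).sum) → ξ bb = 0} ≃
          {f : MvPolynomial ((i : Fin n) × Fin (a i)) 𝕜 //
            ∀ σ : (i : Fin n) → Equiv.Perm (Fin (a i)),
              rename (fun p : (i : Fin n) × Fin (a i) => ⟨p.1, σ p.1 p.2⟩) f = f},
      ∀ ξ (c : ((i : Fin n) × Fin (a i)) →₀ ℕ),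
        MvPolynomial.coeff c (e ξ : MvPolynomial ((i : Fin n) × Fin (a i)) 𝕜) =
          ξ.1 (fun i =>
            ⟨Multiset.map (fun l : Fin (a i) => c ⟨i, l⟩) Finset.univ.val, by
              simp⟩) :=
  ⟨dualEquivPartiallySymmetric 𝕜 a, coeff_dualEquivPartiallySymmetric⟩
end

section
/- Let π = {(α₁,β₁),…,(α_p,β_p)} be a set of pairs with 1 ≤ αᵢ < βᵢ ≤ n and M_π = ⟨X_{αᵢ} X_{βᵢ}⟩ the corresponding quadratic monomial ideal in k[X₁,…,X_n]. For ā ∈ ℕⁿ, under the identification of 𝕁_n[ā]* with partially symmetric polynomials Λ_ā, the annihilator of the defining ideal of J^∞(k[X₁,…,X_n]/M_π) in degree ā equals the principal ideal of Λ_ā generated by ∏_{(α,β)∈π} ∏_{1≤i≤a_α, 1≤j≤a_β} (s_α^{(i)} − s_β^{(j)}). -/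
open MvPolynomial

noncomputable def subst (𝕜 : Type*) [CommRing 𝕜] {σ : Type*} [DecidableEq σ] (u v : σ) :
    σ → MvPolynomial σ 𝕜 := fun w => if w = u then X v else X w

lemma dvd_sub_subst {𝕜 : Type*} [CommRing 𝕜] {σ : Type*} [DecidableEq σ] (u v : σ)
    (f : MvPolynomial σ 𝕜) :
    (X u - X v : MvPolynomial σ 𝕜) ∣ f - aeval (subst 𝕜 u v) f := by
  set I : Ideal (MvPolynomial σ 𝕜) := Ideal.span {X u - X v} with hI
  have h : (Ideal.Quotient.mkₐ 𝕜 I).comp (aeval (subst 𝕜 u v)) = Ideal.Quotient.mkₐ 𝕜 I := by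
    apply MvPolynomial.algHom_ext
    intro w
    simp only [AlgHom.comp_apply, aeval_X, subst, Ideal.Quotient.mkₐ_eq_mk]
    split_ifs with hw
    · rw [hw]
      rw [Ideal.Quotient.eq]
      have hneg : (X v - X u : MvPolynomial σ 𝕜) = -(X u - X v) := by ring
      rw [hneg]
      exact I.neg_mem (Ideal.mem_span_singleton_self _)
    · rfl
  have h2 : Ideal.Quotient.mk I (aeval (subst 𝕜 u v) f) = Ideal.Quotient.mk I f := by
    have := congrArg (fun φ => φ f) h
    simpa using this
  rw [← Ideal.mem_span_singleton, ← hI]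
  have := (Ideal.Quotient.eq).mp h2
  have h3 : f - aeval (subst 𝕜 u v) f = -(aeval (subst 𝕜 u v) f - f) := by ring
  rw [h3]
  exact I.neg_mem this

lemma dvd_of_subst_eq_zero {𝕜 : Type*} [CommRing 𝕜] {σ : Type*} [DecidableEq σ] (u v : σ)
    (f : MvPolynomial σ 𝕜) (h : aeval (subst 𝕜 u v) f = 0) :
    (X u - X v : MvPolynomial σ 𝕜) ∣ f := by
  have := dvd_sub_subst u v f
  rwa [h, sub_zero] at this

lemma prod_dvd_of_subst {𝕜 : Type*} [Field 𝕜] {σ : Type*} [DecidableEq σ]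
    {Ω : Type*} [DecidableEq Ω] (T : Finset Ω) (u v : Ω → σ)
    (g : MvPolynomial σ 𝕜)
    (h0 : ∀ t ∈ T, aeval (subst 𝕜 (u t) (v t)) g = 0)
    (hne : ∀ t ∈ T, ∀ t' ∈ T, t ≠ t' →
      aeval (subst 𝕜 (u t') (v t')) (X (u t) - X (v t) : MvPolynomial σ 𝕜) ≠ 0) :
    (∏ t ∈ T, (X (u t) - X (v t) : MvPolynomial σ 𝕜)) ∣ g := by
  induction T using Finset.cons_induction generalizing g with
  | empty => simp
  | cons t T' ht ih =>
    rw [Finset.prod_cons]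
    obtain ⟨g₁, hg₁⟩ := dvd_of_subst_eq_zero (u t) (v t) g (h0 t (Finset.mem_cons_self _ _))
    have hrest : ∀ t' ∈ T', aeval (subst 𝕜 (u t') (v t')) g₁ = 0 := by
      intro t' ht'
      have h := h0 t' (Finset.mem_cons_of_mem ht')
      rw [hg₁, map_mul] at h
      have hfac := hne t (Finset.mem_cons_self _ _) t' (Finset.mem_cons_of_mem ht')
        (fun he => ht (he ▸ ht'))
      exact (mul_eq_zero.mp h).resolve_left hfac
    have := ih g₁ hrest (fun t1 h1 t2 h2 h12 =>
      hne t1 (Finset.mem_cons_of_mem h1) t2 (Finset.mem_cons_of_mem h2) h12)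
    exact hg₁ ▸ mul_dvd_mul_left _ this

/-- Let `π` be a set of pairs `α < β` in `Fin n`, defining the quadratic monomial
ideal `M_π = ⟨X_α X_β⟩`, and let `ā ∈ ℕⁿ`.  Under the identification of the graded
dual of the degree-`ā` component of `J^∞(k[X₁,…,X_n])` with the partially symmetric
polynomials `Λ_ā` in the variables `s_α^{(i)}` (`1 ≤ i ≤ a_α`), a partially symmetric
polynomial `g` annihilates the arc ideal of `M_π` (equivalently, `g` vanishes under
any substitution identifying a variable of group `α` with one of group `β`, for
`(α,β) ∈ π`) if and only if `g` lies in the principal ideal generated by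
`∏_{(α,β)∈π} ∏_{i,j} (s_α^{(i)} − s_β^{(j)})`. -/
theorem arc_dual_of_quadratic_monomial_ideal
    (𝕜 : Type*) [Field 𝕜] (n : ℕ) (a : Fin n → ℕ)
    (π : Finset (Fin n × Fin n)) (hπ : ∀ p ∈ π, p.1 < p.2)
    (g : MvPolynomial ((i : Fin n) × Fin (a i)) 𝕜)
    (hsym : ∀ σ : (i : Fin n) → Equiv.Perm (Fin (a i)),
      rename (fun p : (i : Fin n) × Fin (a i) => ⟨p.1, σ p.1 p.2⟩) g = g) :
    (∀ p ∈ π, ∀ (i : Fin (a p.1)) (j : Fin (a p.2)),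
        MvPolynomial.aeval (fun v : (i : Fin n) × Fin (a i) =>
          if v = ⟨p.1, i⟩ then (X ⟨p.2, j⟩ : MvPolynomial ((i : Fin n) × Fin (a i)) 𝕜)
          else X v) g = 0) ↔
      (∏ p ∈ π, ∏ i : Fin (a p.1), ∏ j : Fin (a p.2),
        (X ⟨p.1, i⟩ - X ⟨p.2, j⟩ : MvPolynomial ((i : Fin n) × Fin (a i)) 𝕜)) ∣ g := by
  classical
  constructor
  · intro h
    set u : ((p : Fin n × Fin n) × (Fin (a p.1) × Fin (a p.2))) → ((i : Fin n) × Fin (a i)) :=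
      fun t => ⟨t.1.1, t.2.1⟩ with hu
    set v : ((p : Fin n × Fin n) × (Fin (a p.1) × Fin (a p.2))) → ((i : Fin n) × Fin (a i)) :=
      fun t => ⟨t.1.2, t.2.2⟩ with hv
    have key := prod_dvd_of_subst (π.sigma fun _ => Finset.univ) u v g ?_ ?_
    · rw [Finset.prod_sigma] at key
      convert key using 2 with p hp
      exact (Fintype.prod_prod_type (f := fun x : Fin (a p.1) × Fin (a p.2) =>
        (X (u ⟨p, x⟩) - X (v ⟨p, x⟩) : MvPolynomial ((i : Fin n) × Fin (a i)) 𝕜))).symm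
    · rintro ⟨p, i, j⟩ ht
      rw [Finset.mem_sigma] at ht
      exact h p ht.1 i j
    · rintro ⟨p, i, j⟩ ht ⟨q, k, l⟩ ht' hne'
      rw [Finset.mem_sigma] at ht ht'
      have hp := hπ p ht.1
      have hq := hπ q ht'.1
      simp only [map_sub, aeval_X, subst, hu, hv]
      split_ifs with h1 h2 h2
      · have e1 := (Sigma.mk.inj_iff.mp h1).1
        have e2 := (Sigma.mk.inj_iff.mp h2).1
        exact absurd hp (by rw [e1, e2]; exact lt_irrefl _)
      · apply sub_ne_zero_of_ne
        intro heq
        have heq' := MvPolynomial.X_injective heq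
        obtain ⟨e1, he1⟩ := Sigma.mk.inj_iff.mp h1
        obtain ⟨e2, he2⟩ := Sigma.mk.inj_iff.mp heq'
        have hpq : p = q := Prod.ext e1 e2.symm
        subst hpq
        have hik : i = k := eq_of_heq he1
        have hjl : j = l := (eq_of_heq he2).symm
        subst hik; subst hjl
        exact hne' rfl
      · apply sub_ne_zero_of_ne
        intro heq
        have heq' := (Sigma.mk.inj_iff.mp (MvPolynomial.X_injective heq)).1
        have e2 := (Sigma.mk.inj_iff.mp h2).1
        exact absurd (hp.trans (e2 ▸ hq)) (by rw [heq']; exact lt_irrefl _)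
      · apply sub_ne_zero_of_ne
        intro heq
        have := (Sigma.mk.inj_iff.mp (MvPolynomial.X_injective heq)).1
        exact absurd hp (by rw [this]; exact lt_irrefl _)
  · rintro ⟨P, hP⟩ p hp i j
    rw [hP, map_mul, map_prod]
    apply mul_eq_zero_of_left
    apply Finset.prod_eq_zero hp
    rw [map_prod]
    apply Finset.prod_eq_zero (Finset.mem_univ i)
    rw [map_prod]
    apply Finset.prod_eq_zero (Finset.mem_univ j)
    have hne : (⟨p.2, j⟩ : (i : Fin n) × Fin (a i)) ≠ ⟨p.1, i⟩ := by
      intro he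
      exact absurd (hπ p hp) (by rw [(Sigma.mk.inj_iff.mp he).1]; exact lt_irrefl _)
    simp [hne]
end

section
/- Let (L, ∨, ∧) be the Boolean lattice of subsets of [l], and let φ : k[X_I : I ⊆ [l]] → k[z₁,…,z_l, w] be the algebra map X_I ↦ w·∏_{i∈I} z_i. Then the kernel of φ is the ideal generated by the binomials X_I X_J − X_{I∩J} X_{I∪J} for all I, J ⊆ [l]. -/
/-!
Modulo the binomials `X_I X_J − X_{I∩J} X_{I∪J}`, a monomial `X_{I₁} ⋯ X_{I_m}` straightens
into the chain monomial `X_{C₀} ⋯ X_{C_{m-1}}`, `C_k = {i | k < v i}`, where `w^m z^v` is its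
image. So every polynomial is congruent to a polynomial determined by its image, and the
kernel lies in the binomial ideal; conversely each binomial maps to zero since
`I + J = (I ∩ J) + (I ∪ J)` as multisets.
-/

open MvPolynomial Finsupp

namespace MvPolynomial

variable {R σ τ : Type*} [CommRing R]

theorem monomial_eq_smul_monomial_one (a : σ →₀ ℕ) (c : R) :
    monomial a c = c • monomial a 1 := by
  rw [smul_monomial, smul_eq_mul, mul_one]

theorem aeval_monomial_monomial (e : σ → τ →₀ ℕ) (a : σ →₀ ℕ) (c : R) :
    aeval (fun i => (monomial (e i) 1 : MvPolynomial τ R)) (monomial a c) =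
      monomial (linearCombination ℕ e a) c := by
  rw [aeval_monomial, linearCombination_apply, monomial_finsupp_sum_index, algebraMap_eq]
  simp only [monomial_pow, one_pow]

/-- The map `Ψ : z^b ↦ N b` is a one-sided inverse of the monomial map modulo `J`, so every
`p` is congruent to `Ψ (φ p)`, which vanishes on the kernel. -/
theorem ker_aeval_monomial_le {J : Ideal (MvPolynomial σ R)} (e : σ → τ →₀ ℕ)
    (N : (τ →₀ ℕ) → MvPolynomial σ R)
    (hN : ∀ a, monomial a 1 - N (linearCombination ℕ e a) ∈ J) :
    RingHom.ker (aeval fun i => (monomial (e i) 1 : MvPolynomial τ R)) ≤ J := by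
  let Ψ : MvPolynomial τ R →ₗ[R] MvPolynomial σ R := (basisMonomials τ R).constr R N
  have hΨ (b : τ →₀ ℕ) (c : R) : Ψ (monomial b c) = c • N b := by
    rw [monomial_eq_smul_monomial_one, map_smul]
    exact congrArg _ ((basisMonomials τ R).constr_basis R N b)
  have hcongr (p : MvPolynomial σ R) : p - Ψ (aeval (fun i => monomial (e i) 1) p) ∈ J := by
    induction p using MvPolynomial.induction_on' with
    | monomial a c =>
      rw [aeval_monomial_monomial, hΨ, monomial_eq_smul_monomial_one, ← smul_sub]
      exact Submodule.smul_of_tower_mem J c (hN a)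
    | add p q hp hq => simpa only [map_add, add_sub_add_comm] using J.add_mem hp hq
  intro p hp
  simpa only [RingHom.mem_ker.1 hp, map_zero, sub_zero] using hcongr p

end MvPolynomial

section HibiRing

variable (R : Type*) [CommRing R] {α : Type*}

noncomputable def hibiIdeal (α : Type*) [DecidableEq α] : Ideal (MvPolynomial (Finset α) R) :=
  Ideal.span {g | ∃ I J : Finset α, g = X I * X J - X (I ∩ J) * X (I ∪ J)}

theorem X_mul_X_sub_mem_hibiIdeal [DecidableEq α] (I J : Finset α) :
    X I * X J - X (I ∩ J) * X (I ∪ J) ∈ hibiIdeal R α :=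
  Ideal.subset_span ⟨I, J, rfl⟩

/-- The chain `C₀ ⊇ C₁ ⊇ ⋯` of upper level sets of `v`; for `v ≤ m` this is the unique
chain monomial mapping to `w^m z^v`. -/
noncomputable def chainMonomial [Fintype α] (m : ℕ) (v : α → ℕ) : MvPolynomial (Finset α) R :=
  ∏ k ∈ Finset.range m, X ({i | k < v i} : Finset α)

theorem chainMonomial_succ [Fintype α] (m : ℕ) (v : α → ℕ) :
    chainMonomial R (m + 1) v =
      X ({i | 0 < v i} : Finset α) * chainMonomial R m (fun i => v i - 1) := by
  rw [chainMonomial, Finset.prod_range_succ', mul_comm]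
  refine congrArg _ (Finset.prod_congr rfl fun k _ => congrArg X ?_)
  ext i
  simp only [Finset.mem_filter, Finset.mem_univ, true_and]
  omega

/-- Inserting `X_I` into a chain: `X_I X_{C₀} ≡ X_{I ∪ C₀} X_{I ∩ C₀}`, and `X_{I ∩ C₀}` is
inserted into the rest of the chain recursively. -/
theorem X_mul_chainMonomial_sub_mem [DecidableEq α] [Fintype α] (I : Finset α) {m : ℕ}
    {v : α → ℕ} (hv : ∀ i, v i ≤ m) :
    X I * chainMonomial R m v - chainMonomial R (m + 1) (fun i => v i + if i ∈ I then 1 else 0)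
      ∈ hibiIdeal R α := by
  induction m generalizing I v with
  | zero =>
    have hI : ({i | 0 < v i + if i ∈ I then 1 else 0} : Finset α) = I := by
      ext i
      simp only [Finset.mem_filter, Finset.mem_univ, true_and, Nat.le_zero.mp (hv i), zero_add]
      split_ifs with hi <;> simpa
    rw [chainMonomial, chainMonomial, Finset.prod_range_zero, Finset.prod_range_one, hI, mul_one,
      sub_self]
    exact zero_mem _
  | succ m ih =>
    set C : Finset α := {i | 0 < v i}
    set v' : α → ℕ := fun i => v i - 1
    have hunion : ({i | 0 < v i + if i ∈ I then 1 else 0} : Finset α) = I ∪ C := by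
      ext i
      by_cases hi : i ∈ I <;> simp [C, hi]
    have hshift : (fun i => v i + (if i ∈ I then 1 else 0) - 1) =
        fun i => v' i + if i ∈ I ∩ C then 1 else 0 := by
      ext i
      by_cases hi : i ∈ I <;> by_cases hvi : 0 < v i <;> simp [v', C, hi, hvi] <;> omega
    have hrest := ih (I ∩ C) (v := v') fun i => Nat.sub_le_of_le_add (hv i)
    rw [chainMonomial_succ R (m + 1), hunion, hshift, chainMonomial_succ]
    have hsplit : X I * (X C * chainMonomial R m v') -
          X (I ∪ C) * chainMonomial R (m + 1) (fun i => v' i + if i ∈ I ∩ C then 1 else 0) =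
        (X I * X C - X (I ∩ C) * X (I ∪ C)) * chainMonomial R m v' +
          X (I ∪ C) * (X (I ∩ C) * chainMonomial R m v' -
            chainMonomial R (m + 1) (fun i => v' i + if i ∈ I ∩ C then 1 else 0)) := by
      ring
    rw [hsplit]
    exact add_mem (Ideal.mul_mem_right _ _ (X_mul_X_sub_mem_hibiIdeal R I C))
      (Ideal.mul_mem_left _ _ hrest)

end HibiRing

section Cube

variable (R : Type*) [CommRing R] {α : Type*}

/-- The exponent of `w · ∏_{i ∈ I} z_i`, with `w = X none` and `z_i = X (some i)`. -/
noncomputable def cubeVertex (I : Finset α) : Option α →₀ ℕ :=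
  single none 1 + ∑ i ∈ I, single (some i) 1

@[simp] theorem cubeVertex_none (I : Finset α) : cubeVertex I none = 1 := by
  simp [cubeVertex]

@[simp] theorem cubeVertex_some [DecidableEq α] (I : Finset α) (i : α) :
    cubeVertex I (some i) = if i ∈ I then 1 else 0 := by
  simp [cubeVertex, single_apply]

theorem X_none_mul_prod_X_some (I : Finset α) :
    (X none * ∏ i ∈ I, X (some i) : MvPolynomial (Option α) R) = monomial (cubeVertex I) 1 := by
  rw [cubeVertex, ← mul_one (1 : R), ← monomial_mul, monomial_sum_one]
  rfl

theorem cubeVertex_add_cubeVertex [DecidableEq α] (I J : Finset α) :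
    cubeVertex I + cubeVertex J = cubeVertex (I ∩ J) + cubeVertex (I ∪ J) := by
  ext (_ | i)
  · simp
  · simp only [Finsupp.add_apply, cubeVertex_some, Finset.mem_inter, Finset.mem_union]
    split_ifs <;> tauto

/-- The lattice points `(m, v)` with `v ∈ m · [0,1]^α`: the exponents of the image of `φ`. -/
def cubeCone (α : Type*) : AddSubmonoid (Option α →₀ ℕ) where
  carrier := {f | ∀ i, f (some i) ≤ f none}
  add_mem' hf hg i := add_le_add (hf i) (hg i)
  zero_mem' _ := le_rfl

theorem linearCombination_cubeVertex_mem_cubeCone (a : Finset α →₀ ℕ) :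
    linearCombination ℕ cubeVertex a ∈ cubeCone α := by
  classical
  rw [linearCombination_apply, Finsupp.sum]
  refine sum_mem fun I _ => nsmul_mem (fun i => ?_) _
  rw [cubeVertex_some, cubeVertex_none]
  split_ifs <;> simp

noncomputable def cubeNormalForm [Fintype α] (f : Option α →₀ ℕ) : MvPolynomial (Finset α) R :=
  chainMonomial R (f none) (fun i => f (some i))

theorem monomial_sub_cubeNormalForm_mem [DecidableEq α] [Fintype α] (a : Finset α →₀ ℕ) :
    monomial a 1 - cubeNormalForm R (linearCombination ℕ cubeVertex a) ∈ hibiIdeal R α := by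
  obtain ⟨s, rfl⟩ := Multiset.toFinsupp.surjective a
  induction s using Multiset.induction_on with
  | empty => simp [cubeNormalForm, chainMonomial]
  | cons I s ih =>
    set f := linearCombination ℕ cubeVertex (Multiset.toFinsupp s)
    have hf : ∀ i, f (some i) ≤ f none := linearCombination_cubeVertex_mem_cubeCone _
    have hinsert := X_mul_chainMonomial_sub_mem R I hf
    have hnf : cubeNormalForm R (cubeVertex I + f) =
        chainMonomial R (f none + 1) (fun i => f (some i) + if i ∈ I then 1 else 0) := by
      simp [cubeNormalForm, add_comm]
    rw [← Multiset.singleton_add, map_add, Multiset.toFinsupp_singleton, monomial_single_add,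
      pow_one, map_add, linearCombination_single, one_smul, hnf]
    have hsplit : X I * monomial (Multiset.toFinsupp s) 1 -
          chainMonomial R (f none + 1) (fun i => f (some i) + if i ∈ I then 1 else 0) =
        X I * (monomial (Multiset.toFinsupp s) 1 - cubeNormalForm R f) +
          (X I * chainMonomial R (f none) (fun i => f (some i)) -
            chainMonomial R (f none + 1) (fun i => f (some i) + if i ∈ I then 1 else 0)) := by
      rw [cubeNormalForm]
      ring
    rw [hsplit]
    exact add_mem (Ideal.mul_mem_left _ _ ih) hinsert

theorem ker_aeval_cubeVertex [DecidableEq α] [Fintype α] :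
    RingHom.ker (aeval fun I : Finset α => (monomial (cubeVertex I) 1 : MvPolynomial (Option α) R))
      = hibiIdeal R α := by
  refine le_antisymm (ker_aeval_monomial_le _ _ (monomial_sub_cubeNormalForm_mem R)) ?_
  refine Ideal.span_le.2 ?_
  rintro g ⟨I, J, rfl⟩
  rw [SetLike.mem_coe, RingHom.mem_ker, map_sub, map_mul, map_mul, aeval_X, aeval_X, aeval_X,
    aeval_X, monomial_mul, monomial_mul, cubeVertex_add_cubeVertex, sub_self]

end Cube

/-- For the Boolean lattice of subsets of `[l]`, the kernel of the algebra map
`φ : k[X_I : I ⊆ [l]] → k[z₁,…,z_l, w]`, `X_I ↦ w·∏_{i∈I} z_i` (with `w = X none`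
and `z_i = X (some i)`), is the ideal generated by the binomials
`X_I X_J − X_{I∩J} X_{I∪J}`. -/
theorem cube_toric_ideal (𝕜 : Type*) [Field 𝕜] (l : ℕ) :
    RingHom.ker
        ((MvPolynomial.aeval (fun I : Finset (Fin l) =>
            (X none * ∏ i ∈ I, X (some i) : MvPolynomial (Option (Fin l)) 𝕜)) :
          MvPolynomial (Finset (Fin l)) 𝕜 →ₐ[𝕜]
            MvPolynomial (Option (Fin l)) 𝕜) :
          MvPolynomial (Finset (Fin l)) 𝕜 →+* MvPolynomial (Option (Fin l)) 𝕜) =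
      Ideal.span {g : MvPolynomial (Finset (Fin l)) 𝕜 |
        ∃ I J : Finset (Fin l), g = X I * X J - X (I ∩ J) * X (I ∪ J)} := by
  simp_rw [X_none_mul_prod_X_some]
  exact ker_aeval_cubeVertex 𝕜
end
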